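/- arXiv:2206.08993 — 7 statements merged into one kernel-verified Lean document; each statement's English description precedes it below -/
import Mathlib

section
/- Let α be a weak composition of length n and S ⊆ [n]. If the set T = {γ : γ ≥ α in Bruhat order and supp(γ) ⊆ S} is nonempty, then T contains a unique minimum element m(α, S) with respect to the Bruhat order. -/
/-- The `j`-th largest element (0-indexed) of a finite set of `Fin n`,
viewed as an element of `[n] = {1,...,n}` via `i ↦ i + 1`; `0` as default. -/
def jthLargestF (n : ℕ) (S : Finset (Fin n)) (j : ℕ) : ℕ :=
  (((Finset.sort S (· ≤ ·)).reverse).map (fun i => (i : ℕ) + 1)).getD j 0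

/-- The `j`-th smallest element (0-indexed), similarly. -/
def jthSmallestF (n : ℕ) (S : Finset (Fin n)) (j : ℕ) : ℕ :=
  ((Finset.sort S (· ≤ ·)).map (fun i => (i : ℕ) + 1)).getD j 0

/-- Order on subsets of `[n]`: equal cardinality and `j`-th largest elements compare. -/
def setLEF (n : ℕ) (S T : Finset (Fin n)) : Prop :=
  S.card = T.card ∧ ∀ j < S.card, jthLargestF n S j ≤ jthLargestF n T j

/-- The `c`-th column of the key tableau of the weak composition `α`: `{i : α i ≥ c}`. -/
def col (n : ℕ) (α : Fin n → ℕ) (c : ℕ) : Finset (Fin n) :=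
  Finset.univ.filter (fun i => c ≤ α i)

/-- The support of a weak composition. -/
def suppC (n : ℕ) (α : Fin n → ℕ) : Finset (Fin n) :=
  Finset.univ.filter (fun i => 0 < α i)

/-- Bruhat order on weak compositions: key tableaux have the same shape and
compare entry-wise, expressed column by column. -/
def bruhatLE (n : ℕ) (γ α : Fin n → ℕ) : Prop :=
  ∀ c : ℕ, 1 ≤ c → setLEF n (col n γ c) (col n α c)

/-- `μ` is the Bruhat-minimum of `{γ : γ ≥ α, supp γ ⊆ S}`. -/
def isBruhatMin (n : ℕ) (α : Fin n → ℕ) (S : Finset (Fin n)) (μ : Fin n → ℕ) : Prop :=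
  bruhatLE n α μ ∧ suppC n μ ⊆ S ∧
    ∀ γ : Fin n → ℕ, bruhatLE n α γ → suppC n γ ⊆ S → bruhatLE n μ γ

/-- `μ` is the Bruhat-maximum of `{γ : γ ≤ α, supp γ ⊆ S}`. -/
def isBruhatMax (n : ℕ) (α : Fin n → ℕ) (S : Finset (Fin n)) (μ : Fin n → ℕ) : Prop :=
  bruhatLE n μ α ∧ suppC n μ ⊆ S ∧
    ∀ γ : Fin n → ℕ, bruhatLE n γ α → suppC n γ ⊆ S → bruhatLE n γ μ

/-- `γ` is obtained from `α` by a single left swap: exchange parts `α i < α j` with `i < j`. -/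
def leftSwapStep (n : ℕ) (γ α : Fin n → ℕ) : Prop :=
  ∃ i j : Fin n, i < j ∧ α i < α j ∧ γ = fun k => α (Equiv.swap i j k)

/-- The left swap order: reflexive-transitive closure of single left swaps. -/
def leftSwapLE (n : ℕ) (γ α : Fin n → ℕ) : Prop :=
  Relation.ReflTransGen (leftSwapStep n) γ α

/-- `B = C ◁ A`: there is a strictly increasing choice `b` of elements of `C`,
`b k` being the smallest element of `C` that is `≥` the `k`-th smallest element
of `A` and exceeds all previously chosen elements, with `B` the set of chosen elements. -/
def isLhd (n : ℕ) (C A B : Finset (Fin n)) : Prop :=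
  ∃ b : Fin A.card → Fin n, StrictMono b ∧ (∀ k, b k ∈ C) ∧
    (∀ k : Fin A.card, jthSmallestF n A k ≤ (b k : ℕ) + 1) ∧
    (∀ k : Fin A.card, ∀ c ∈ C, jthSmallestF n A k ≤ (c : ℕ) + 1 →
      (∀ j : Fin A.card, j < k → b j < c) → b k ≤ c) ∧
    B = Finset.image b Finset.univ

/-- `lhdChain [C₁, ..., C_k] B` means `B = C₁ ◁ (C₂ ◁ (⋯ ◁ C_k))`. -/
def lhdChain (n : ℕ) : List (Finset (Fin n)) → Finset (Fin n) → Prop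
  | [], B => B = ∅
  | [C], B => B = C
  | C :: D :: rest, B => ∃ B', lhdChain n (D :: rest) B' ∧ isLhd n C B' B

/-- `T ∈ RSSYT(α)`: a reverse semistandard Young tableau of shape `α⁺`, encoded by its
columns (strictly decreasing sets, rows weakly decreasing), whose left key is
entry-wise at most `key α`. -/
def memRSSYT (n : ℕ) (α : Fin n → ℕ) (T : ℕ → Finset (Fin n)) : Prop :=
  (∀ c, 1 ≤ c → (T c).card = (col n α c).card) ∧
  (∀ c, 1 ≤ c → ∀ k < (T (c+1)).card, jthLargestF n (T (c+1)) k ≤ jthLargestF n (T c) k) ∧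
  (∀ c, 1 ≤ c → ∃ B, lhdChain n ((List.range c).map (fun i => T (i+1))) B ∧
    setLEF n B (col n α c))

/-- `(L, E) ∈ RSVT(α)`: a reverse set-valued tableau of shape `α⁺` encoded as a diagram
pair by columns: `L c` the leading entries and `E c` the extra entries of column `c`,
with left key (of the leading tableau) entry-wise at most `key α`. -/
def memRSVT (n : ℕ) (α : Fin n → ℕ) (L E : ℕ → Finset (Fin n)) : Prop :=
  (∀ c, 1 ≤ c → Disjoint (L c) (E c)) ∧
  (∀ c, 1 ≤ c → (L c).card = (col n α c).card) ∧
  (∀ c, 1 ≤ c → ∀ k < (L (c+1)).card, jthLargestF n (L (c+1)) k ≤ jthLargestF n (L c) k) ∧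
  (∀ c, 1 ≤ c → ∀ e ∈ E c,
    ((L (c+1)).filter (fun l => e < l)).card < ((L c).filter (fun l => e < l)).card) ∧
  (∀ c, 1 ≤ c → ∃ B, lhdChain n ((List.range c).map (fun i => L (i+1))) B ∧
    setLEF n B (col n α c))

/-- `(L, E)` is a valid reverse set-valued tableau (of some shape), without any
left-key condition. -/
def isValidRSVT (n : ℕ) (L E : ℕ → Finset (Fin n)) : Prop :=
  (∀ c, 1 ≤ c → Disjoint (L c) (E c)) ∧
  (∀ c, 1 ≤ c → (L (c+1)).card ≤ (L c).card) ∧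
  (∃ N, ∀ c, N ≤ c → L c = ∅ ∧ E c = ∅) ∧
  (∀ c, 1 ≤ c → ∀ k < (L (c+1)).card, jthLargestF n (L (c+1)) k ≤ jthLargestF n (L c) k) ∧
  (∀ c, 1 ≤ c → ∀ e ∈ E c,
    ((L (c+1)).filter (fun l => e < l)).card < ((L c).filter (fun l => e < l)).card)

/-- `j`-th largest element of a finite set of naturals (0-indexed), default `0`. -/
def jthLargestN (S : Finset ℕ) (j : ℕ) : ℕ :=
  ((Finset.sort S (· ≤ ·)).reverse).getD j 0

/-- `j`-th smallest element of a finite set of naturals (0-indexed), default `0`. -/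
def jthSmallestN (S : Finset ℕ) (j : ℕ) : ℕ :=
  (Finset.sort S (· ≤ ·)).getD j 0

/-!
Both conditions `γ ≥ α` and `supp γ ⊆ S` are column by column, and a column `X` lies below `Y` in
the Gale order iff `|X| = |Y|` and, below every threshold, `Y` has at most as many elements as `X`.
Match each element `a` of a column `A` of `key α`, scanning upwards, to the smallest free `s ∈ S`
with `a ≤ s`, and let `G(A) ⊆ S` be the set of matched elements. Below every threshold, `A` has
as many elements as `G(A)` plus the still unmatched ones, while any `T ⊆ S` above `A` has at most
as many as `A` minus the unmatched ones; so `G(A)` is the Gale-minimum of the subsets of `S` above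
`A` as soon as there is one. Since `G(A)` grows with `A`, the sets `G(col α c)` are nested and are
the columns of the key of a composition, which is the required minimum.
-/

open Finset

variable {n : ℕ}

section Counting

def countLT (X : Finset (Fin n)) (x : ℕ) : ℕ := #{i ∈ X | i.val < x}

def countEq (X : Finset (Fin n)) (x : ℕ) : ℕ := #{i ∈ X | i.val = x}

@[simp]
lemma countLT_zero (X : Finset (Fin n)) : countLT X 0 = 0 := by
  simp [countLT]

lemma countLT_le_card (X : Finset (Fin n)) (x : ℕ) : countLT X x ≤ #X :=
  card_filter_le _ _

lemma countLT_succ (X : Finset (Fin n)) (x : ℕ) :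
    countLT X (x + 1) = countLT X x + countEq X x := by
  rw [countLT, countLT, countEq, ← card_union_of_disjoint]
  · congr 1
    ext i
    simp only [mem_filter, mem_union, Nat.lt_succ_iff_lt_or_eq, and_or_left]
  · exact disjoint_filter.2 fun i _ h => h.ne

lemma countLT_of_le (X : Finset (Fin n)) {x : ℕ} (hx : n ≤ x) : countLT X x = #X := by
  rw [countLT, filter_true_of_mem fun i _ => i.isLt.trans_le hx]

lemma countEq_le_one (X : Finset (Fin n)) (x : ℕ) : countEq X x ≤ 1 :=
  card_le_one.2 fun i hi j hj => Fin.ext <| by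
    rw [mem_filter] at hi hj
    omega

lemma countEq_mono {X Y : Finset (Fin n)} (h : X ⊆ Y) (x : ℕ) : countEq X x ≤ countEq Y x :=
  card_le_card (filter_subset_filter _ h)

lemma countEq_val (X : Finset (Fin n)) (i : Fin n) :
    countEq X i = if i ∈ X then 1 else 0 := by
  simp only [countEq, Fin.val_inj, filter_eq']
  split_ifs <;> simp

lemma eq_of_countLT_eq {X Y : Finset (Fin n)} (h : ∀ x, countLT X x = countLT Y x) : X = Y := by
  ext i
  have hi := h (i + 1)
  rw [countLT_succ, countLT_succ, h i, countEq_val, countEq_val] at hi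
  split_ifs at hi <;> simp_all

end Counting

section GaleOrder

lemma lt_getD_map_iff {l : List (Fin n)} (hl : l.Pairwise (· > ·)) (x j : ℕ) :
    x < (l.map fun i => i.val + 1).getD j 0 ↔ j < (l.filter fun i => x ≤ i.val).length := by
  induction l generalizing j with
  | nil => simp
  | cons a l ih =>
    rw [List.pairwise_cons] at hl
    by_cases hxa : x ≤ a.val
    · cases j with
      | zero => simp [hxa]
      | succ j => simpa [List.filter_cons_of_pos, hxa] using ih hl.2 j
    · have hnil : (l.filter fun i => x ≤ i.val) = [] :=
        List.filter_eq_nil_iff.2 fun b hb => by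
          have : b.val < a.val := hl.1 b hb
          simp only [decide_eq_true_eq, not_le]
          omega
      cases j with
      | zero => simp [hxa, hnil]
      | succ j => simpa [hxa, hnil] using ih hl.2 j

lemma lt_jthLargestF_iff (X : Finset (Fin n)) (x j : ℕ) :
    x < jthLargestF n X j ↔ j + countLT X x < #X := by
  have hsorted : ((X.sort (· ≤ ·)).reverse).Pairwise (· > ·) := by
    rw [List.pairwise_reverse]
    exact (sortedLT_sort X).pairwise
  have hdef : jthLargestF n X j = (((X.sort (· ≤ ·)).reverse).map fun i => i.val + 1).getD j 0 := by
    -- the coercion `List (Fin n) → List ℕ` in `jthLargestF` elaborates to a `flatMap`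
    show (List.map (· + 1) ((X.sort (· ≤ ·)).reverse.flatMap fun i => [i.val])).getD j 0 = _
    rw [← List.map_eq_flatMap, List.map_map]
    rfl
  have hlen : (((X.sort (· ≤ ·)).reverse).filter fun i => x ≤ i.val).length
      = #{i ∈ X | x ≤ i.val} := by
    rw [List.filter_reverse, List.length_reverse, ← Multiset.coe_card, ← Multiset.filter_coe,
      sort_eq]
    rfl
  have hsplit := card_filter_add_card_filter_not (s := X) fun i : Fin n => i.val < x
  simp only [not_lt] at hsplit
  rw [hdef, lt_getD_map_iff hsorted, hlen, countLT]
  omega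

theorem setLEF_iff_countLT {X Y : Finset (Fin n)} :
    setLEF n X Y ↔ #X = #Y ∧ ∀ x, countLT Y x ≤ countLT X x := by
  refine ⟨fun ⟨hcard, hle⟩ => ⟨hcard, fun x => ?_⟩, fun ⟨hcard, hle⟩ => ⟨hcard, fun j hj => ?_⟩⟩
  · by_contra! hlt
    have := countLT_le_card Y x
    have hX := (lt_jthLargestF_iff X x (#Y - countLT Y x)).2 (by omega)
    have hY := (lt_jthLargestF_iff Y x (#Y - countLT Y x)).1 (hX.trans_le (hle _ (by omega)))
    omega
  · have hpos := (lt_jthLargestF_iff X 0 j).2 (by simpa using hj)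
    set x := jthLargestF n X j - 1
    have hX := (lt_jthLargestF_iff X x j).1 (by omega)
    have hY := (lt_jthLargestF_iff Y x j).2 (by have := hle x; omega)
    omega

lemma setLEF_antisymm {X Y : Finset (Fin n)} (hXY : setLEF n X Y) (hYX : setLEF n Y X) :
    X = Y :=
  eq_of_countLT_eq fun x =>
    le_antisymm ((setLEF_iff_countLT.1 hYX).2 x) ((setLEF_iff_countLT.1 hXY).2 x)

end GaleOrder

section GreedyMatching

variable (S A : Finset (Fin n))

/-- The number of elements of `A` below `x` that the greedy matching has not matched with an
element of `S` below `x`. -/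
def unmatched : ℕ → ℕ
  | 0 => 0
  | x + 1 => unmatched x + countEq A x - countEq S x

def greedyMatch : Finset (Fin n) := {s ∈ S | 0 < unmatched S A s + countEq A s}

lemma countEq_greedyMatch (x : ℕ) :
    countEq (greedyMatch S A) x =
      if 0 < unmatched S A x + countEq A x then countEq S x else 0 := by
  rw [countEq, greedyMatch, filter_filter]
  split_ifs with h
  · congr 1
    exact filter_congr fun i _ => ⟨fun hi => hi.2, fun hi => ⟨hi ▸ h, hi⟩⟩
  · rw [card_eq_zero, filter_eq_empty_iff]
    rintro i - ⟨hi, rfl⟩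
    exact h hi

lemma countLT_eq_countLT_greedyMatch_add_unmatched (x : ℕ) :
    countLT A x = countLT (greedyMatch S A) x + unmatched S A x := by
  induction x with
  | zero => simp [unmatched]
  | succ x ih =>
    rw [countLT_succ, countLT_succ, countEq_greedyMatch, unmatched]
    have := countEq_le_one S x
    split_ifs <;> omega

lemma countLT_add_unmatched_le {T : Finset (Fin n)} (hTS : T ⊆ S)
    (hTA : ∀ x, countLT T x ≤ countLT A x) (x : ℕ) :
    countLT T x + unmatched S A x ≤ countLT A x := by
  induction x with
  | zero => simp [unmatched]
  | succ x ih =>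
    have hfeas := hTA (x + 1)
    rw [countLT_succ, countLT_succ] at hfeas ⊢
    have := countEq_mono hTS x
    rw [unmatched]
    omega

variable {S A}

lemma unmatched_mono {A' : Finset (Fin n)} (h : A' ⊆ A) (x : ℕ) :
    unmatched S A' x ≤ unmatched S A x := by
  induction x with
  | zero => rfl
  | succ x ih =>
    have := countEq_mono h x
    rw [unmatched, unmatched]
    omega

lemma greedyMatch_mono {A' : Finset (Fin n)} (h : A' ⊆ A) :
    greedyMatch S A' ⊆ greedyMatch S A :=
  monotone_filter_right S fun s _ hs =>
    hs.trans_le (add_le_add (unmatched_mono h s) (countEq_mono h s))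

variable {T : Finset (Fin n)}

lemma card_greedyMatch (hTS : T ⊆ S) (hAT : setLEF n A T) : #(greedyMatch S A) = #A := by
  obtain ⟨hcard, hle⟩ := setLEF_iff_countLT.1 hAT
  have hcons := countLT_eq_countLT_greedyMatch_add_unmatched S A n
  have hlow := countLT_add_unmatched_le S A hTS hle n
  simp only [countLT_of_le _ le_rfl] at hcons hlow
  omega

theorem setLEF_greedyMatch (hTS : T ⊆ S) (hAT : setLEF n A T) :
    setLEF n A (greedyMatch S A) :=
  setLEF_iff_countLT.2 ⟨(card_greedyMatch hTS hAT).symm, fun x => by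
    have := countLT_eq_countLT_greedyMatch_add_unmatched S A x
    omega⟩

theorem greedyMatch_setLEF (hTS : T ⊆ S) (hAT : setLEF n A T) :
    setLEF n (greedyMatch S A) T := by
  obtain ⟨hcard, hle⟩ := setLEF_iff_countLT.1 hAT
  refine setLEF_iff_countLT.2 ⟨by rw [card_greedyMatch hTS hAT, hcard], fun x => ?_⟩
  have := countLT_eq_countLT_greedyMatch_add_unmatched S A x
  have := countLT_add_unmatched_le S A hTS hle x
  omega

end GreedyMatching

section Compositions

@[simp]
lemma mem_col {α : Fin n → ℕ} {c : ℕ} {i : Fin n} : i ∈ col n α c ↔ c ≤ α i := by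
  simp [col]

lemma col_antitone (α : Fin n → ℕ) : Antitone (col n α) :=
  fun _ _ h _ hi => mem_col.2 (h.trans (mem_col.1 hi))

lemma suppC_eq_col_one (α : Fin n → ℕ) : suppC n α = col n α 1 := by
  ext i
  simp [suppC, Nat.one_le_iff_ne_zero, Nat.pos_iff_ne_zero]

lemma col_subset_of_suppC_subset {γ : Fin n → ℕ} {S : Finset (Fin n)} (hγ : suppC n γ ⊆ S)
    {c : ℕ} (hc : 1 ≤ c) : col n γ c ⊆ S :=
  (col_antitone γ hc).trans (suppC_eq_col_one γ ▸ hγ)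

lemma col_sup_succ (α : Fin n → ℕ) : col n α (univ.sup α + 1) = ∅ :=
  eq_empty_of_forall_notMem fun i hi =>
    (mem_col.1 hi).not_gt (Nat.lt_succ_of_le (le_sup (mem_univ i)))

lemma exists_col_eq {T : ℕ → Finset (Fin n)} (hT : Antitone T) {N : ℕ} (hN : T N = ∅) :
    ∃ μ : Fin n → ℕ, ∀ c, 1 ≤ c → col n μ c = T c := by
  refine ⟨fun i => Nat.findGreatest (fun c => i ∈ T c) N, fun c hc => ?_⟩
  ext i
  rw [mem_col]
  constructor
  · intro h
    exact hT h (Nat.findGreatest_of_ne_zero rfl (Nat.one_le_iff_ne_zero.1 (hc.trans h)))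
  · intro hi
    refine Nat.le_findGreatest ?_ hi
    by_contra! hNc
    simpa [hN] using hT hNc.le hi

lemma eq_of_col_eq {β δ : Fin n → ℕ} (h : ∀ c, 1 ≤ c → col n β c = col n δ c) : β = δ := by
  have hle : ∀ β δ : Fin n → ℕ, (∀ c, 1 ≤ c → col n β c = col n δ c) → ∀ i, β i ≤ δ i := by
    intro β δ h i
    rcases Nat.eq_zero_or_pos (β i) with h0 | h0
    · omega
    · exact mem_col.1 (h (β i) h0 ▸ mem_col.2 le_rfl)
  funext i
  exact le_antisymm (hle β δ h i) (hle δ β (fun c hc => (h c hc).symm) i)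

lemma bruhatLE_antisymm {β δ : Fin n → ℕ} (hβδ : bruhatLE n β δ) (hδβ : bruhatLE n δ β) :
    β = δ :=
  eq_of_col_eq fun c hc => setLEF_antisymm (hβδ c hc) (hδβ c hc)

end Compositions

/-- if `{γ : γ ≥ α, supp γ ⊆ S}` is nonempty, it has a unique Bruhat-minimum. -/
theorem stmt3 (n : ℕ) (α : Fin n → ℕ) (S : Finset (Fin n))
    (h : ∃ γ : Fin n → ℕ, bruhatLE n α γ ∧ suppC n γ ⊆ S) :
    ∃! μ : Fin n → ℕ, isBruhatMin n α S μ := by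
  obtain ⟨γ₀, hαγ₀, hγ₀S⟩ := h
  set T : ℕ → Finset (Fin n) := fun c => greedyMatch S (col n α c)
  have hT_empty : T (univ.sup α + 1) = ∅ := by
    rw [← card_eq_zero, card_greedyMatch (col_subset_of_suppC_subset hγ₀S (by omega))
      (hαγ₀ _ (by omega)), col_sup_succ, card_empty]
  obtain ⟨μ, hμ⟩ := exists_col_eq (fun _ _ h => greedyMatch_mono (col_antitone α h)) hT_empty
  have hαμ : bruhatLE n α μ := fun c hc =>
    hμ c hc ▸ setLEF_greedyMatch (col_subset_of_suppC_subset hγ₀S hc) (hαγ₀ c hc)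
  have hμS : suppC n μ ⊆ S := by
    rw [suppC_eq_col_one, hμ 1 le_rfl]
    exact filter_subset _ _
  have hμ_min : ∀ γ, bruhatLE n α γ → suppC n γ ⊆ S → bruhatLE n μ γ := fun γ hαγ hγS c hc =>
    hμ c hc ▸ greedyMatch_setLEF (col_subset_of_suppC_subset hγS hc) (hαγ c hc)
  exact ⟨μ, ⟨hαμ, hμS, hμ_min⟩, fun ν ⟨hαν, hνS, hν_min⟩ =>
    bruhatLE_antisymm (hν_min μ hαμ hμS) (hμ_min ν hαν hνS)⟩
end

section
/- Let α be a weak composition of length n and S ⊆ [n]. If the set {γ : γ ≤ α in Bruhat order and supp(γ) ⊆ S} is nonempty, then it contains a unique maximum element M(α, S), and this set is nonempty if and only if |S| ≥ |supp(α)| and S' ≤ supp(α), where S' consists of the |supp(α)| smallest elements of S. -/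
/-! Comparing two sets of the same size by their `j`-th largest elements amounts to comparing,
for every threshold `x`, how many elements are `≥ x`. Among the subsets `B ⊆ S` with `B ≤ A`
there is then a greatest one, built greedily from the top threshold down; it exists exactly when
`S` has at least as many elements below every threshold as `A`, and it grows with `A`. Applied to
the nested columns of `key α` it yields nested columns, i.e. the key of a composition `M(α, S)`,
which is the maximum. For `A = supp α` the condition on `S` says `S' ≤ supp α`, because `S'` is
the least `|supp α|`-element subset of `S`. -/

namespace BruhatMax

open Finset

variable {n : ℕ}

/- Elements `i : Fin n` are read as elements `i + 1` of `[n]`, as in `jthLargestF`; the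
thresholds `x` range over `ℕ`. -/
def countGE (S : Finset (Fin n)) (x : ℕ) : ℕ := #{i ∈ S | x ≤ i.val + 1}

def countLT (S : Finset (Fin n)) (x : ℕ) : ℕ := #{i ∈ S | i.val + 1 < x}

def countEq (S : Finset (Fin n)) (x : ℕ) : ℕ := #{i ∈ S | i.val + 1 = x}

section Counting

variable (S : Finset (Fin n))

lemma countGE_add_countLT (x : ℕ) : countGE S x + countLT S x = #S := by
  rw [countGE, countLT, ← card_filter_add_card_filter_not (s := S) (fun i : Fin n => x ≤ i.val + 1)]
  simp only [not_le]

lemma countGE_zero : countGE S 0 = #S := by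
  simp [countGE]

lemma countGE_eq_zero {x : ℕ} (hx : n < x) : countGE S x = 0 := by
  simp only [countGE, card_eq_zero, filter_eq_empty_iff]
  intro i _
  have := i.isLt
  omega

lemma countLT_eq_card {x : ℕ} (hx : n < x) : countLT S x = #S := by
  have := countGE_add_countLT S x
  rw [countGE_eq_zero S hx] at this
  omega

lemma countGE_eq_countEq_add (x : ℕ) : countGE S x = countEq S x + countGE S (x + 1) := by
  rw [countGE, countEq, countGE, ← card_union_of_disjoint (disjoint_filter.2 fun _ _ _ => by omega),
    ← filter_or]
  congr 1
  exact filter_congr fun _ _ => by omega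

lemma countLT_succ (x : ℕ) : countLT S (x + 1) = countLT S x + countEq S x := by
  rw [countLT, countLT, countEq, ← card_union_of_disjoint (disjoint_filter.2 fun _ _ _ => by omega),
    ← filter_or]
  congr 1
  exact filter_congr fun _ _ => by omega

lemma countGE_antitone {x y : ℕ} (h : x ≤ y) : countGE S y ≤ countGE S x :=
  card_le_card (monotone_filter_right S fun _ _ hi => h.trans hi)

lemma countEq_le_one (x : ℕ) : countEq S x ≤ 1 :=
  card_le_one.2 fun a ha b hb => by
    simp only [mem_filter] at ha hb
    exact Fin.ext (by omega)

lemma countEq_val_succ (i : Fin n) : countEq S ((i : ℕ) + 1) = if i ∈ S then 1 else 0 := by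
  rw [countEq, filter_congr (q := (· = i)) fun _ _ => by simp [Fin.ext_iff], filter_eq']
  split_ifs <;> simp

end Counting

lemma countGE_mono {S T : Finset (Fin n)} (h : S ⊆ T) (x : ℕ) : countGE S x ≤ countGE T x :=
  card_le_card (filter_subset_filter _ h)

lemma countLT_mono {S T : Finset (Fin n)} (h : S ⊆ T) (x : ℕ) : countLT S x ≤ countLT T x :=
  card_le_card (filter_subset_filter _ h)

lemma countEq_mono {S T : Finset (Fin n)} (h : S ⊆ T) (x : ℕ) : countEq S x ≤ countEq T x :=
  card_le_card (filter_subset_filter _ h)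

lemma eq_of_countGE_eq {S T : Finset (Fin n)} (h : ∀ x, countGE S x = countGE T x) : S = T := by
  ext i
  have hEq : countEq S ((i : ℕ) + 1) = countEq T ((i : ℕ) + 1) := by
    have := countGE_eq_countEq_add S ((i : ℕ) + 1)
    have := countGE_eq_countEq_add T ((i : ℕ) + 1)
    have := h ((i : ℕ) + 1)
    have := h ((i : ℕ) + 1 + 1)
    omega
  rw [countEq_val_succ, countEq_val_succ] at hEq
  split_ifs at hEq <;> simp_all

lemma card_filter_orderEmbOfFin {α : Type*} [LinearOrder α] (S : Finset α) (p : α → Prop)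
    [DecidablePred p] : #{s ∈ S | p s} = #{k : Fin #S | p (S.orderEmbOfFin rfl k)} := by
  conv_lhs => rw [← S.map_orderEmbOfFin_univ rfl, filter_map, card_map]
  rfl

lemma card_filter_lt_orderEmbOfFin {α : Type*} [LinearOrder α] (S : Finset α) (k : Fin #S) :
    #{s ∈ S | s < S.orderEmbOfFin rfl k} = k := by
  rw [card_filter_orderEmbOfFin]
  simpa using Fin.card_filter_val_lt (n := #S) (m := k)

lemma jthLargestF_eq {S : Finset (Fin n)} {j : ℕ} (hj : j < #S) :
    jthLargestF n S j = (S.orderEmbOfFin rfl ⟨#S - 1 - j, by omega⟩ : ℕ) + 1 := by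
  rw [jthLargestF, List.getD_eq_getElem _ _ (by simpa using hj), List.getElem_map]
  simp [orderEmbOfFin_apply, ← List.map_eq_flatMap]

lemma le_jthLargestF_iff {S : Finset (Fin n)} {j : ℕ} (hj : j < #S) (x : ℕ) :
    x ≤ jthLargestF n S j ↔ j + 1 ≤ countGE S x := by
  set y := S.orderEmbOfFin rfl ⟨#S - 1 - j, by omega⟩
  have hyS : y ∈ S := S.orderEmbOfFin_mem rfl _
  have hge : #{s ∈ S | y ≤ s} = j + 1 := by
    have := card_filter_add_card_filter_not (s := S) (fun s => s < y)
    rw [card_filter_lt_orderEmbOfFin] at this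
    simp only [not_lt] at this
    omega
  rw [jthLargestF_eq hj]
  constructor
  · intro hx
    rw [← hge]
    exact card_le_card (monotone_filter_right S fun s _ (hs : y ≤ s) => hx.trans (by simpa))
  · intro hcnt
    by_contra! hx
    have hsub : {i ∈ S | x ≤ i.val + 1} ⊆ {s ∈ S | y ≤ s}.erase y := by
      intro i hi
      simp only [mem_filter] at hi
      simp only [mem_erase, mem_filter, Fin.le_def]
      exact ⟨fun h => by subst h; omega, hi.1, by omega⟩
    have := card_le_card hsub
    rw [card_erase_of_mem (by simp [hyS]), hge] at this
    exact absurd (hcnt.trans this) (by omega)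

lemma setLEF_iff_countGE (S T : Finset (Fin n)) :
    setLEF n S T ↔ #S = #T ∧ ∀ x, countGE S x ≤ countGE T x := by
  refine and_congr_right fun hcard => ⟨fun h x => ?_, fun h j hj => ?_⟩
  · rcases Nat.eq_zero_or_pos (countGE S x) with h0 | h0
    · omega
    · have hj : countGE S x - 1 < #S := by
        have := countGE_add_countLT S x
        omega
      have := (le_jthLargestF_iff (hcard ▸ hj) x).1
        (((le_jthLargestF_iff hj x).2 (by omega)).trans (h _ hj))
      omega
  · exact (le_jthLargestF_iff (hcard ▸ hj) _).2
      (((le_jthLargestF_iff hj _).1 le_rfl).trans (h _))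

lemma setLEF_trans {S T U : Finset (Fin n)} (hST : setLEF n S T) (hTU : setLEF n T U) :
    setLEF n S U := by
  rw [setLEF_iff_countGE] at *
  exact ⟨hST.1.trans hTU.1, fun x => (hST.2 x).trans (hTU.2 x)⟩

/- `greedyCount S A x` is the largest `countGE B x` over `B ⊆ S` with `countGE B ≤ countGE A`,
computed from the top threshold down; `greedySet S A` is the set realising it. -/
def greedyCount (S A : Finset (Fin n)) (x : ℕ) : ℕ :=
  if x ≤ n then min (countGE A x) (greedyCount S A (x + 1) + countEq S x) else 0
termination_by n + 1 - x

def greedySet (S A : Finset (Fin n)) : Finset (Fin n) :=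
  {i ∈ S | greedyCount S A (i.val + 1) = greedyCount S A (i.val + 1 + 1) + 1}

section Greedy

variable (S A : Finset (Fin n))

lemma greedyCount_of_le {x : ℕ} (hx : x ≤ n) :
    greedyCount S A x = min (countGE A x) (greedyCount S A (x + 1) + countEq S x) := by
  rw [greedyCount, if_pos hx]

lemma greedyCount_of_lt {x : ℕ} (hx : n < x) : greedyCount S A x = 0 := by
  rw [greedyCount, if_neg (by omega)]

lemma greedyCount_le_countGE (x : ℕ) : greedyCount S A x ≤ countGE A x := by
  unfold greedyCount
  split_ifs <;> omega

lemma greedyCount_le_succ_add (x : ℕ) :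
    greedyCount S A x ≤ greedyCount S A (x + 1) + countEq S x := by
  rw [greedyCount]
  split_ifs <;> omega

lemma greedyCount_succ_le (x : ℕ) : greedyCount S A (x + 1) ≤ greedyCount S A x := by
  rcases le_or_gt x n with hx | hx
  · rw [greedyCount_of_le S A hx]
    have := greedyCount_le_countGE S A (x + 1)
    have := countGE_antitone A (Nat.le_add_right x 1)
    omega
  · rw [greedyCount_of_lt S A (by omega : n < x + 1)]
    exact Nat.zero_le _

lemma greedySet_subset : greedySet S A ⊆ S := filter_subset _ _

lemma countEq_greedySet (x : ℕ) : countEq (greedySet S A) x =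
    if greedyCount S A x = greedyCount S A (x + 1) + 1 then countEq S x else 0 := by
  rw [countEq, countEq, greedySet, filter_filter]
  split_ifs with h
  · exact congrArg card (filter_congr fun i _ => by constructor <;> rintro ⟨_, rfl⟩ <;> simp_all)
  · rw [card_eq_zero, filter_eq_empty_iff]
    rintro i - ⟨hi, rfl⟩
    exact h hi

lemma countGE_greedySet (x : ℕ) : countGE (greedySet S A) x = greedyCount S A x := by
  induction x using greedyCount.induct (n := n) with
  | case1 x hx ih =>
    rw [countGE_eq_countEq_add, ih, countEq_greedySet]
    have := greedyCount_succ_le S A x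
    have := greedyCount_le_succ_add S A x
    have := countEq_le_one S x
    split_ifs <;> omega
  | case2 x hx =>
    rw [countGE_eq_zero _ (by omega), greedyCount_of_lt S A (by omega)]

lemma countGE_le_greedyCount {B : Finset (Fin n)} (hBS : B ⊆ S)
    (hBA : ∀ y, countGE B y ≤ countGE A y) (x : ℕ) : countGE B x ≤ greedyCount S A x := by
  induction x using greedyCount.induct (n := n) with
  | case1 x hx ih =>
    rw [greedyCount_of_le S A hx, countGE_eq_countEq_add]
    have := countEq_mono hBS x
    have := hBA x
    have := countGE_eq_countEq_add B x
    omega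
  | case2 x hx => rw [countGE_eq_zero _ (by omega)]; exact Nat.zero_le _

lemma card_le_greedyCount_add_countLT (hAS : ∀ x, countLT A x ≤ countLT S x) (x : ℕ) :
    #A ≤ greedyCount S A x + countLT S x := by
  induction x using greedyCount.induct (n := n) with
  | case1 x hx ih =>
    rw [greedyCount_of_le S A hx]
    have := countGE_add_countLT A x
    have := countLT_succ S x
    have := hAS x
    omega
  | case2 x hx =>
    rw [greedyCount_of_lt S A (by omega), ← countLT_eq_card A (by omega : n < x)]
    simpa using hAS x

lemma card_greedySet (hAS : ∀ x, countLT A x ≤ countLT S x) : #(greedySet S A) = #A := by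
  rw [← countGE_zero, countGE_greedySet]
  refine le_antisymm (countGE_zero A ▸ greedyCount_le_countGE S A 0) ?_
  simpa [countLT] using card_le_greedyCount_add_countLT S A hAS 0

lemma greedyCount_add_countGE_le {A' : Finset (Fin n)} (hA' : A' ⊆ A) (x : ℕ) :
    greedyCount S A x + countGE A' x ≤ greedyCount S A' x + countGE A x := by
  induction x using greedyCount.induct (n := n) with
  | case1 x hx ih =>
    rw [greedyCount_of_le S A hx, greedyCount_of_le S A' hx]
    have := countGE_eq_countEq_add A x
    have := countGE_eq_countEq_add A' x
    have := countEq_mono hA' x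
    have := countGE_mono hA' x
    omega
  | case2 x hx =>
    rw [greedyCount_of_lt S A (by omega), greedyCount_of_lt S A' (by omega),
      countGE_eq_zero _ (by omega), countGE_eq_zero _ (by omega)]

lemma greedySet_mono {A' : Finset (Fin n)} (hA' : A' ⊆ A) : greedySet S A' ⊆ greedySet S A := by
  intro i hi
  simp only [greedySet, mem_filter] at hi ⊢
  obtain ⟨hiS, hjump'⟩ := hi
  refine ⟨hiS, ?_⟩
  set x := i.val + 1
  have hx : x ≤ n := i.isLt
  -- were `x` not a jump of `greedyCount S A`, the count would be capped by `countGE A x`, which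
  -- the comparison with `greedyCount S A'` one step higher rules out
  have hEq : countEq S x = 1 := by rw [countEq_val_succ, if_pos hiS]
  have := greedyCount_of_le S A hx
  have := greedyCount_succ_le S A x
  have := greedyCount_add_countGE_le S A hA' (x + 1)
  have := greedyCount_le_countGE S A' x
  have := countGE_eq_countEq_add A x
  have := countGE_eq_countEq_add A' x
  have := countEq_mono hA' x
  have := countEq_le_one A x
  omega

end Greedy

lemma mem_col (α : Fin n → ℕ) (c : ℕ) (i : Fin n) : i ∈ col n α c ↔ c ≤ α i := by
  simp [col]

lemma col_antitone (α : Fin n → ℕ) {c c' : ℕ} (h : c ≤ c') : col n α c' ⊆ col n α c :=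
  fun i hi => (mem_col α c i).2 (h.trans ((mem_col α c' i).1 hi))

lemma suppC_eq_col_one (α : Fin n → ℕ) : suppC n α = col n α 1 := rfl

lemma bruhatLE_antisymm {γ α : Fin n → ℕ} (h₁ : bruhatLE n γ α) (h₂ : bruhatLE n α γ) :
    γ = α := by
  have hmem : ∀ i c, 1 ≤ c → (c ≤ γ i ↔ c ≤ α i) := fun i c hc => by
    rw [← mem_col, ← mem_col, eq_of_countGE_eq fun x => le_antisymm
      (((setLEF_iff_countGE _ _).1 (h₁ c hc)).2 x) (((setLEF_iff_countGE _ _).1 (h₂ c hc)).2 x)]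
  funext i
  rcases lt_trichotomy (γ i) (α i) with h | h | h
  · have := (hmem i (α i) (by omega)).2 le_rfl; omega
  · exact h
  · have := (hmem i (γ i) (by omega)).1 le_rfl; omega

lemma isBruhatMax_unique {α μ ν : Fin n → ℕ} {S : Finset (Fin n)} (hμ : isBruhatMax n α S μ)
    (hν : isBruhatMax n α S ν) : μ = ν :=
  bruhatLE_antisymm (hν.2.2 μ hμ.1 hμ.2.1) (hμ.2.2 ν hν.1 hν.2.1)

def ofColumns (C : ℕ → Finset (Fin n)) (N : ℕ) (i : Fin n) : ℕ :=
  Nat.findGreatest (fun c => i ∈ C c) N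

lemma col_ofColumns {C : ℕ → Finset (Fin n)} {N : ℕ}
    (hC : ∀ c c', 1 ≤ c → c ≤ c' → C c' ⊆ C c) (hN : C (N + 1) = ∅) {c : ℕ} (hc : 1 ≤ c) :
    col n (ofColumns C N) c = C c := by
  ext i
  rw [mem_col, ofColumns]
  constructor
  · intro h
    have hpos : Nat.findGreatest (fun c => i ∈ C c) N ≠ 0 := by omega
    exact hC _ _ hc h (Nat.findGreatest_of_ne_zero rfl hpos)
  · intro hi
    have hcN : c ≤ N := by
      by_contra! hcN
      simpa [hN] using hC _ _ (by omega) hcN hi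
    exact Nat.le_findGreatest hcN hi

lemma countLT_le_countLT_of_setLEF {S A B : Finset (Fin n)} (hBS : B ⊆ S) (hBA : setLEF n B A)
    (x : ℕ) : countLT A x ≤ countLT S x := by
  obtain ⟨hcard, hle⟩ := (setLEF_iff_countGE B A).1 hBA
  have := countGE_add_countLT A x
  have := countGE_add_countLT B x
  have := hle x
  have := countLT_mono hBS x
  omega

lemma setLEF_greedySet {S A : Finset (Fin n)} (hAS : ∀ x, countLT A x ≤ countLT S x) :
    setLEF n (greedySet S A) A :=
  (setLEF_iff_countGE _ _).2 ⟨card_greedySet S A hAS, fun x =>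
    countGE_greedySet S A x ▸ greedyCount_le_countGE S A x⟩

lemma setLEF_greedySet_of_setLEF {S A B : Finset (Fin n)} (hBS : B ⊆ S) (hBA : setLEF n B A) :
    setLEF n B (greedySet S A) := by
  obtain ⟨hcard, hle⟩ := (setLEF_iff_countGE B A).1 hBA
  refine (setLEF_iff_countGE _ _).2 ⟨?_, fun x => ?_⟩
  · rw [card_greedySet S A (countLT_le_countLT_of_setLEF hBS hBA), hcard]
  · rw [countGE_greedySet]
    exact countGE_le_greedyCount S A hBS hle x

def maxComp (α : Fin n → ℕ) (S : Finset (Fin n)) : Fin n → ℕ :=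
  ofColumns (fun c => greedySet S (col n α c)) (univ.sup α)

lemma col_maxComp (α : Fin n → ℕ) (S : Finset (Fin n)) {c : ℕ} (hc : 1 ≤ c) :
    col n (maxComp α S) c = greedySet S (col n α c) := by
  refine col_ofColumns (fun c c' _ h => greedySet_mono S _ (col_antitone α h)) ?_ hc
  have hcol : col n α (univ.sup α + 1) = ∅ :=
    filter_eq_empty_iff.2 fun i _ h => by have := le_sup (f := α) (mem_univ i); omega
  rw [hcol, ← card_eq_zero, card_greedySet S ∅ fun x => by simp [countLT], card_empty]

lemma isBruhatMax_maxComp {α : Fin n → ℕ} {S : Finset (Fin n)}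
    (hαS : ∀ x, countLT (suppC n α) x ≤ countLT S x) : isBruhatMax n α S (maxComp α S) := by
  refine ⟨fun c hc => ?_, ?_, fun γ hγα hγS c hc => ?_⟩
  · rw [col_maxComp α S hc]
    exact setLEF_greedySet fun x => (countLT_mono (col_antitone α hc) x).trans (hαS x)
  · rw [suppC_eq_col_one, col_maxComp α S le_rfl]
    exact greedySet_subset S _
  · rw [col_maxComp α S hc]
    exact setLEF_greedySet_of_setLEF ((col_antitone γ hc).trans hγS) (hγα c hc)

lemma card_filter_le_eq_card_filter_lt_add_one {α : Type*} [LinearOrder α] {S : Finset α} {z : α}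
    (hz : z ∈ S) : #{y ∈ S | y ≤ z} = #{y ∈ S | y < z} + 1 := by
  rw [← card_insert_of_notMem (a := z) (by simp)]
  congr 1
  ext y
  simp only [mem_filter, mem_insert, le_iff_lt_or_eq]
  aesop

def smallest {α : Type*} [LinearOrder α] (S : Finset α) (m : ℕ) : Finset α :=
  {x ∈ S | #{y ∈ S | y ≤ x} ≤ m}

lemma card_smallest {α : Type*} [LinearOrder α] (S : Finset α) {m : ℕ} (hm : m ≤ #S) :
    #(smallest S m) = m := by
  have hrank (k : Fin #S) : #{y ∈ S | y ≤ S.orderEmbOfFin rfl k} = k + 1 := by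
    rw [card_filter_le_eq_card_filter_lt_add_one (S.orderEmbOfFin_mem rfl k),
      card_filter_lt_orderEmbOfFin]
  rw [smallest, card_filter_orderEmbOfFin]
  simp only [hrank, Nat.add_one_le_iff]
  simpa [min_eq_right hm] using Fin.card_filter_val_lt (n := #S) (m := m)

lemma min_le_countLT_smallest (S : Finset (Fin n)) {m : ℕ} (hm : m ≤ #S) (x : ℕ) :
    min m (countLT S x) ≤ countLT (smallest S m) x := by
  by_cases hall : ∀ s ∈ S, s.val + 1 < x → s ∈ smallest S m
  · exact (min_le_right _ _).trans
      (card_le_card fun s hs => by simp_all only [mem_filter, and_true])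
  · push Not at hall
    obtain ⟨s, hsS, hsx, hs⟩ := hall
    -- `s ∉ smallest S m`, so every element of `smallest S m` lies below `s`
    have hbelow : ∀ t ∈ smallest S m, t.val + 1 < x := by
      intro t ht
      simp only [smallest, mem_filter, not_and, not_le] at ht hs
      by_contra! hxt
      have hst : #{y ∈ S | y ≤ s} ≤ #{y ∈ S | y ≤ t} := card_le_card
        (monotone_filter_right S fun y _ (h : y ≤ s) => h.trans (Fin.le_def.2 (by omega)))
      exact absurd (hst.trans ht.2) (not_le.2 (hs hsS))
    refine (min_le_left _ _).trans (le_of_eq ?_)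
    rw [countLT, filter_true_of_mem hbelow, card_smallest S hm]

lemma setLEF_smallest {S B : Finset (Fin n)} (hBS : B ⊆ S) : setLEF n (smallest S #B) B := by
  have hcard := card_smallest S (card_le_card hBS)
  refine (setLEF_iff_countGE _ _).2 ⟨hcard, fun x => ?_⟩
  have := min_le_countLT_smallest S (card_le_card hBS) x
  have := countGE_add_countLT (smallest S #B) x
  have := countGE_add_countLT B x
  have := countLT_mono hBS x
  omega

end BruhatMax

/-- if `{γ : γ ≤ α, supp γ ⊆ S}` is nonempty then it has a unique
Bruhat-maximum `M(α,S)`; and it is nonempty iff `|S| ≥ |supp α|` and the set of the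
`|supp α|` smallest elements of `S` is `≤ supp α`. -/
theorem stmt4 (n : ℕ) (α : Fin n → ℕ) (S : Finset (Fin n)) :
    ((∃ γ : Fin n → ℕ, bruhatLE n γ α ∧ suppC n γ ⊆ S) →
      ∃! μ : Fin n → ℕ, isBruhatMax n α S μ) ∧
    ((∃ γ : Fin n → ℕ, bruhatLE n γ α ∧ suppC n γ ⊆ S) ↔
      ((suppC n α).card ≤ S.card ∧
        setLEF n (S.filter (fun x => (S.filter (fun y => y ≤ x)).card ≤ (suppC n α).card))
          (suppC n α))) := by
  open BruhatMax in
  refine ⟨fun ⟨γ, hγα, hγS⟩ => ?_, ⟨fun ⟨γ, hγα, hγS⟩ => ?_, fun ⟨_, hsmall⟩ => ?_⟩⟩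
  · have hmax := isBruhatMax_maxComp (countLT_le_countLT_of_setLEF hγS (hγα 1 le_rfl))
    exact ⟨maxComp α S, hmax, fun μ hμ => isBruhatMax_unique hμ hmax⟩
  · have hsupp : setLEF n (suppC n γ) (suppC n α) := hγα 1 le_rfl
    refine ⟨hsupp.1 ▸ Finset.card_le_card hγS, setLEF_trans ?_ hsupp⟩
    exact hsupp.1 ▸ setLEF_smallest (S := S) hγS
  · have hmax :=
      isBruhatMax_maxComp (countLT_le_countLT_of_setLEF (Finset.filter_subset _ S) hsmall)
    exact ⟨maxComp α S, hmax.1, hmax.2.1⟩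
end

section
/- Let α, γ be weak compositions of length n with supp(α) = supp(γ). Then γ ≤ α in Bruhat order if and only if γ̄ ≤ ᾱ in Bruhat order, where β̄ denotes the composition obtained from β by decreasing each positive entry by 1. -/
/-! Decreasing every positive part by one deletes the first column of the key tableau and
shifts the remaining columns one step to the left. The first column is the support, which
`α` and `γ` share, so it never obstructs the comparison. -/

lemma col_tsub_one (n : ℕ) (β : Fin n → ℕ) {c : ℕ} (hc : 1 ≤ c) :
    col n (fun i => β i - 1) c = col n β (c + 1) := by
  ext i; simp only [col, Finset.mem_filter, Finset.mem_univ, true_and]; omega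

lemma col_one (n : ℕ) (β : Fin n → ℕ) : col n β 1 = suppC n β := rfl

lemma setLEF_refl (n : ℕ) (S : Finset (Fin n)) : setLEF n S S :=
  ⟨rfl, fun _ _ => le_rfl⟩

lemma bruhatLE_tsub_one_iff (n : ℕ) (γ α : Fin n → ℕ) :
    bruhatLE n (fun i => γ i - 1) (fun i => α i - 1) ↔
      ∀ c, 2 ≤ c → setLEF n (col n γ c) (col n α c) := by
  constructor
  · intro h c hc
    obtain ⟨c, rfl⟩ := Nat.exists_eq_add_of_le' hc
    simpa only [col_tsub_one n _ (Nat.le_add_left 1 c)] using h (c + 1) (by omega)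
  · intro h c hc
    rw [col_tsub_one n γ hc, col_tsub_one n α hc]
    exact h (c + 1) (by omega)

/-- for `supp α = supp γ`, `γ ≤ α` in Bruhat order iff `γ̄ ≤ ᾱ`. -/
theorem stmt6 (n : ℕ) (α γ : Fin n → ℕ) (h : suppC n γ = suppC n α) :
    bruhatLE n γ α ↔ bruhatLE n (fun i => γ i - 1) (fun i => α i - 1) := by
  rw [bruhatLE_tsub_one_iff]
  refine ⟨fun hle c hc => hle c (by omega), fun hle c hc => ?_⟩
  rcases hc.eq_or_lt with rfl | hc
  · rw [col_one, col_one, h]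
    exact setLEF_refl n _
  · exact hle c hc
end

section
/- Let α, γ be weak compositions of length n with supp(α) = supp(γ). Then γ ⪯ α in the left swap order if and only if γ̄ ⪯ ᾱ in the left swap order, where β̄ is obtained from β by decreasing each positive entry by 1. -/
/-!
A composition `γ` lies below `α` in the left swap order exactly when, for every threshold `c` and
every `m`, the first `m` parts of `γ` contain at least as many entries `≥ c` as those of `α`, with
equality for `m = n`. A left swap can only raise these counts. Conversely, if `γ ≠ α` satisfies
them, let `i` be the first position where they differ; then `α i < γ i`, and swapping `i` with the
first later position whose entry lies in `(α i, γ i]` preserves the counts and lowers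
`∑ k, k * α k`. Decreasing the positive parts by one turns the threshold `c + 1` into `c` for
`c ≥ 1`, while the thresholds `0` and `1` give no condition once `supp α = supp γ`.
-/

open Finset in
theorem sum_apply_swap_add {ι β M : Type*} [Fintype ι] [DecidableEq ι] [AddCommMonoid M]
    (f : ι → β → M) (α : ι → β) {i j : ι} (hij : i ≠ j) :
    ∑ k, f k (α (Equiv.swap i j k)) + (f i (α i) + f j (α j)) =
      ∑ k, f k (α k) + (f i (α j) + f j (α i)) := by
  have hrest : ∑ k ∈ {i, j}ᶜ, f k (α (Equiv.swap i j k)) = ∑ k ∈ {i, j}ᶜ, f k (α k) :=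
    sum_congr rfl fun k hk => by
      simp only [mem_compl, mem_insert, mem_singleton, not_or] at hk
      rw [Equiv.swap_apply_of_ne_of_ne hk.1 hk.2]
  rw [← sum_compl_add_sum {i, j}, ← sum_compl_add_sum {i, j}, sum_pair hij, sum_pair hij, hrest,
    Equiv.swap_apply_left, Equiv.swap_apply_right]
  abel

namespace WeakComposition

open Finset

section Counting

variable {n : ℕ}

def countGE (α : Fin n → ℕ) (c a b : ℕ) : ℕ :=
  #{k : Fin n | a ≤ k ∧ k < b ∧ c ≤ α k}

def weight (α : Fin n → ℕ) : ℕ :=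
  ∑ k : Fin n, (k : ℕ) * α k

def countLE (γ α : Fin n → ℕ) : Prop :=
  (∀ c m, countGE α c 0 m ≤ countGE γ c 0 m) ∧ ∀ c, countGE α c 0 n = countGE γ c 0 n

theorem countGE_split (α : Fin n → ℕ) (c : ℕ) {a b d : ℕ} (hab : a ≤ b) (hbd : b ≤ d) :
    countGE α c a d = countGE α c a b + countGE α c b d := by
  simp only [countGE, card_filter, ← sum_add_distrib]
  exact sum_congr rfl fun k _ => by split_ifs <;> omega

theorem countGE_succ_self (α : Fin n → ℕ) (c : ℕ) (i : Fin n) :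
    countGE α c i (i + 1) = if c ≤ α i then 1 else 0 := by
  simp only [countGE, card_filter]
  rw [Fintype.sum_eq_single i fun k hk => if_neg fun h => hk (Fin.ext (by omega))]
  simp

theorem countGE_eq_add_ite_add (α : Fin n → ℕ) (c : ℕ) {a b : ℕ} {i : Fin n}
    (hai : a ≤ i) (hib : i < b) :
    countGE α c a b = countGE α c a i + (if c ≤ α i then 1 else 0) + countGE α c (i + 1) b := by
  rw [countGE_split α c hai (by omega : (i : ℕ) ≤ b), countGE_split α c (Nat.le_add_right _ 1) hib,
    countGE_succ_self, add_assoc]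

theorem countGE_congr {α γ : Fin n → ℕ} {c c' a b : ℕ}
    (h : ∀ k : Fin n, a ≤ k → k < b → (c ≤ α k ↔ c' ≤ γ k)) :
    countGE α c a b = countGE γ c' a b := by
  simp only [countGE]
  congr 1
  ext k
  simp only [mem_filter, mem_univ, true_and]
  constructor
  · exact fun ⟨hak, hkb, hc⟩ => ⟨hak, hkb, (h k hak hkb).1 hc⟩
  · exact fun ⟨hak, hkb, hc⟩ => ⟨hak, hkb, (h k hak hkb).2 hc⟩

theorem countGE_anti (α : Fin n → ℕ) {c c' : ℕ} (hc : c ≤ c') (a b : ℕ) :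
    countGE α c' a b ≤ countGE α c a b :=
  card_le_card fun k => by
    simp only [mem_filter, mem_univ, true_and]
    exact fun ⟨hak, hkb, h⟩ => ⟨hak, hkb, hc.trans h⟩

theorem countGE_zero_congr (α γ : Fin n → ℕ) (a b : ℕ) : countGE α 0 a b = countGE γ 0 a b :=
  countGE_congr fun _ _ _ => by simp

theorem countGE_one_eq_of_suppC_eq {α γ : Fin n → ℕ} (h : suppC n γ = suppC n α) (a b : ℕ) :
    countGE α 1 a b = countGE γ 1 a b :=
  countGE_congr fun k _ _ => by
    simpa [suppC, Nat.one_le_iff_ne_zero, Nat.pos_iff_ne_zero] using (Finset.ext_iff.1 h k).symm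

theorem countGE_sub_one (α : Fin n → ℕ) (c a b : ℕ) :
    countGE (fun k => α k - 1) (c + 1) a b = countGE α (c + 2) a b :=
  countGE_congr fun _ _ _ => by omega

end Counting

section Swap

variable {n : ℕ} {α : Fin n → ℕ} {i j : Fin n}

theorem countGE_swap (hij : i < j) (hα : α i < α j) (c m : ℕ) :
    countGE (fun k => α (Equiv.swap i j k)) c 0 m =
      countGE α c 0 m + if (i : ℕ) < m ∧ m ≤ j ∧ α i < c ∧ c ≤ α j then 1 else 0 := by
  have hsum := sum_apply_swap_add (fun (k : Fin n) v => if (k : ℕ) < m ∧ c ≤ v then 1 else 0) α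
    hij.ne
  have hij' : (i : ℕ) < j := hij
  simp only [countGE, card_filter, zero_le, true_and]
  split_ifs at hsum ⊢ <;> omega

theorem _root_.leftSwapStep.weight_lt {β : Fin n → ℕ} (h : leftSwapStep n β α) :
    weight β < weight α := by
  obtain ⟨i, j, hij, hα, rfl⟩ := h
  have hsum := sum_apply_swap_add (fun (k : Fin n) v => (k : ℕ) * v) α hij.ne
  have hij' : (i : ℕ) < j := hij
  have : (i : ℕ) * α j + j * α i < i * α i + j * α j := by nlinarith
  simp only [weight]
  omega

end Swap

section Order

variable {n : ℕ}

theorem countLE.refl (α : Fin n → ℕ) : countLE α α :=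
  ⟨fun _ _ => le_rfl, fun _ => rfl⟩

theorem countLE.trans {α β γ : Fin n → ℕ} (hγβ : countLE γ β) (hβα : countLE β α) :
    countLE γ α :=
  ⟨fun c m => (hβα.1 c m).trans (hγβ.1 c m), fun c => (hβα.2 c).trans (hγβ.2 c)⟩

theorem _root_.leftSwapStep.countLE {β α : Fin n → ℕ} (h : leftSwapStep n β α) :
    countLE β α := by
  obtain ⟨i, j, hij, hα, rfl⟩ := h
  refine ⟨fun c m => by rw [countGE_swap hij hα]; omega, fun c => ?_⟩
  rw [countGE_swap hij hα, if_neg fun h => j.isLt.not_ge h.2.1, add_zero]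

theorem countLE_of_leftSwapLE {γ α : Fin n → ℕ} (h : leftSwapLE n γ α) : countLE γ α := by
  induction h with
  | refl => exact countLE.refl _
  | tail _ hstep ih => exact ih.trans hstep.countLE

theorem countLE_iff_countLE_sub_one {α γ : Fin n → ℕ} (h : suppC n γ = suppC n α) :
    countLE γ α ↔ countLE (fun k => γ k - 1) (fun k => α k - 1) := by
  have low : ∀ c a b, c ≤ 1 → countGE α c a b = countGE γ c a b := by
    intro c a b hc
    interval_cases c
    exacts [countGE_zero_congr α γ a b, countGE_one_eq_of_suppC_eq h a b]
  constructor
  · rintro ⟨hle, htot⟩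
    refine ⟨fun c m => ?_, fun c => ?_⟩ <;> rcases c with _ | c
    · exact (countGE_zero_congr _ _ 0 m).le
    · simpa only [countGE_sub_one] using hle (c + 2) m
    · exact countGE_zero_congr _ _ 0 n
    · simpa only [countGE_sub_one] using htot (c + 2)
  · rintro ⟨hle, htot⟩
    refine ⟨fun c m => ?_, fun c => ?_⟩ <;> obtain _ | _ | c := c
    · exact (low 0 0 m (by omega)).le
    · exact (low 1 0 m le_rfl).le
    · simpa only [countGE_sub_one] using hle (c + 1) m
    · exact low 0 0 n (by omega)
    · exact low 1 0 n le_rfl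
    · simpa only [countGE_sub_one] using htot (c + 1)

end Order

section Step

variable {n : ℕ} {γ α : Fin n → ℕ} {i : Fin n}

theorem lt_apply_of_countGE_le (hle : ∀ c m, countGE α c 0 m ≤ countGE γ c 0 m)
    (hpre : ∀ k : Fin n, k < i → γ k = α k) (hne : γ i ≠ α i) : α i < γ i := by
  by_contra! hγα
  have hprefix : countGE α (α i) 0 i = countGE γ (α i) 0 i :=
    countGE_congr fun k _ hk => by rw [hpre k hk]
  have hα := countGE_split α (α i) (Nat.zero_le _) (Nat.le_add_right (i : ℕ) 1)
  have hγ := countGE_split γ (α i) (Nat.zero_le _) (Nat.le_add_right (i : ℕ) 1)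
  rw [countGE_succ_self, if_pos le_rfl] at hα
  rw [countGE_succ_self, if_neg (by omega)] at hγ
  have := hle (α i) (i + 1)
  omega

theorem countGE_lt_of_forall_notMem_Ioc (hle : ∀ c m, countGE α c 0 m ≤ countGE γ c 0 m)
    (hpre : ∀ k : Fin n, k < i → γ k = α k) (hi : α i < γ i) {m : ℕ} (him : (i : ℕ) < m)
    (hgap : ∀ k : Fin n, i < k → (k : ℕ) < m → α k ∉ Set.Ioc (α i) (γ i))
    {c : ℕ} (hc : c ∈ Set.Ioc (α i) (γ i)) :
    countGE α c 0 m < countGE γ c 0 m := by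
  obtain ⟨hc, hc'⟩ := hc
  have hprefix (c : ℕ) : countGE α c 0 i = countGE γ c 0 i :=
    countGE_congr fun k _ hk => by rw [hpre k hk]
  -- on the window `(i, m)` no entry of `α` separates the thresholds `c` and `γ i + 1`
  have hwindow : countGE α c (i + 1) m = countGE α (γ i + 1) (i + 1) m :=
    countGE_congr fun k hk hkm => by
      have := hgap k hk hkm
      simp only [Set.mem_Ioc, not_and_or, not_lt, not_le] at this
      omega
  have hαc := countGE_eq_add_ite_add α c (Nat.zero_le _) him
  have hγc := countGE_eq_add_ite_add γ c (Nat.zero_le _) him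
  have hαc' := countGE_eq_add_ite_add α (γ i + 1) (Nat.zero_le _) him
  have hγc' := countGE_eq_add_ite_add γ (γ i + 1) (Nat.zero_le _) him
  rw [if_neg (by omega)] at hαc hαc' hγc'
  rw [if_pos hc'] at hγc
  have := hle (γ i + 1) m
  have := countGE_anti γ (show c ≤ γ i + 1 by omega) (i + 1) m
  have := hprefix c
  have := hprefix (γ i + 1)
  omega

theorem exists_leftSwapStep_countLE (h : countLE γ α) (hne : γ ≠ α) :
    ∃ β, leftSwapStep n β α ∧ countLE γ β := by
  obtain ⟨i, hi, hmin⟩ := wellFounded_lt.has_min {k | γ k ≠ α k} (Function.ne_iff.1 hne)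
  have hpre : ∀ k : Fin n, k < i → γ k = α k := fun k hk => not_not.1 fun hk' => hmin k hk' hk
  have hlt := lt_apply_of_countGE_le h.1 hpre hi
  have hex : {k : Fin n | i < k ∧ α k ∈ Set.Ioc (α i) (γ i)}.Nonempty := by
    by_contra hempty
    have := countGE_lt_of_forall_notMem_Ioc h.1 hpre hlt i.isLt
      (fun k hik _ hk => hempty ⟨k, hik, hk⟩) (c := α i + 1) ⟨lt_add_one _, hlt⟩
    exact this.ne (h.2 _)
  -- the minimality of `j` is what keeps the counts of the swapped composition below those of `γ`
  obtain ⟨j, ⟨hij, hαij, hαj⟩, hjmin⟩ := wellFounded_lt.has_min _ hex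
  have hstep : leftSwapStep n (fun k => α (Equiv.swap i j k)) α := ⟨i, j, hij, hαij, rfl⟩
  refine ⟨_, hstep, fun c m => ?_, fun c => (hstep.countLE.2 c).symm.trans (h.2 c)⟩
  rw [countGE_swap hij hαij]
  split_ifs with hcm
  · exact countGE_lt_of_forall_notMem_Ioc h.1 hpre hlt hcm.1
      (fun k hik hkm hk => hjmin k ⟨hik, hk⟩ (Fin.lt_def.2 (by omega)))
      ⟨hcm.2.2.1, hcm.2.2.2.trans hαj⟩
  · exact h.1 c m

end Step

variable {n : ℕ}

theorem leftSwapLE_of_countLE {γ α : Fin n → ℕ} (h : countLE γ α) : leftSwapLE n γ α := by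
  induction hw : weight α using Nat.strong_induction_on generalizing α with
  | _ w ih =>
    by_cases hγα : γ = α
    · exact hγα ▸ Relation.ReflTransGen.refl
    obtain ⟨β, hstep, hβ⟩ := exists_leftSwapStep_countLE h hγα
    exact (ih _ (hw ▸ hstep.weight_lt) hβ rfl).tail hstep

theorem leftSwapLE_iff_countLE {γ α : Fin n → ℕ} : leftSwapLE n γ α ↔ countLE γ α :=
  ⟨countLE_of_leftSwapLE, leftSwapLE_of_countLE⟩

end WeakComposition

/-- for `supp α = supp γ`, `γ ⪯ α` in left swap order iff `γ̄ ⪯ ᾱ`. -/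
theorem stmt7 (n : ℕ) (α γ : Fin n → ℕ) (h : suppC n γ = suppC n α) :
    leftSwapLE n γ α ↔ leftSwapLE n (fun i => γ i - 1) (fun i => α i - 1) := by
  rw [WeakComposition.leftSwapLE_iff_countLE, WeakComposition.leftSwapLE_iff_countLE]
  exact WeakComposition.countLE_iff_countLE_sub_one h
end

section
/- For weak compositions α and γ of length n, γ ⪯ α in the left swap order if and only if γ ≤ α in the Bruhat order. -/
/-!
Both orders are read off the prefix counts `#{k < y | c ≤ β k}`: by counting, `γ ≤ α` in Bruhat
order says exactly that in every column `c ≥ 1` the two compositions have the same total count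
and every prefix count of `α` is at most that of `γ`. A left swap of parts `β i < β j` raises
the counts of the prefixes containing `i` but not `j` in the columns `β i < c ≤ β j`, and leaves
all others alone, so left swaps go down in Bruhat order.

Conversely, let `γ < α` and let `i` be the first position where they differ; then `α i < γ i`,
so in column `w = γ i` the composition `γ` is strictly ahead from prefix `i + 1` until some first
prefix `t` where `α` catches up. Among the positions in `(i, t)` carrying a part `< w` (there is
one just before `t`), choose `j` with the largest part. Moving `γ i` to position `j` gives a
composition `x` with `γ` a left swap of `x` and still `x ≤ α`, and the weight
`∑ (n - k) β k` strictly decreases, so iterating reaches `α`.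
-/

open Finset

theorem List.Pairwise.getElem_le_iff_countP_le {α : Type*} [LinearOrder α] {l : List α}
    (hl : l.Pairwise (· ≥ ·)) {j : ℕ} (hj : j < l.length) (y : α) :
    l[j] ≤ y ↔ l.countP (fun x => y < x) ≤ j := by
  induction l generalizing j with
  | nil => simp at hj
  | cons a t ih =>
    obtain ⟨ha, ht⟩ := List.pairwise_cons.1 hl
    by_cases hay : a ≤ y
    · have hle : ∀ x ∈ a :: t, x ≤ y := by
        simpa [List.forall_mem_cons, hay] using fun x hx => (ha x hx).trans hay
      have hzero : (a :: t).countP (fun x => y < x) = 0 :=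
        List.countP_eq_zero.2 fun x hx => by simpa using hle x hx
      simp [hle _ (List.getElem_mem hj), hzero]
    · cases j with
      | zero => simp [hay, List.countP_cons]
      | succ j => simpa [not_le.1 hay, List.countP_cons] using ih ht (by simpa using hj)

theorem jthLargestF_le_iff {n : ℕ} {S : Finset (Fin n)} {j : ℕ} (hj : j < #S) (y : ℕ) :
    jthLargestF n S j ≤ y ↔ #{x ∈ S | y ≤ x.val} ≤ j := by
  set l := (S.sort (· ≤ ·)).reverse.map (fun i : Fin n => i.val + 1)
  have hdef : jthLargestF n S j = l.getD j 0 := by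
    simp [jthLargestF, l, List.bind_eq_flatMap, ← List.map_eq_flatMap, List.map_map,
      Function.comp_def]
  have hsorted : l.Pairwise (· ≥ ·) := by
    rw [List.pairwise_map, List.pairwise_reverse]
    exact (S.pairwise_sort (· ≤ ·)).imp fun h => by simpa using h
  have hlen : l.length = #S := by simp [l]
  have hcount : l.countP (fun x => y < x) = #{x ∈ S | y ≤ x.val} := by
    rw [List.countP_map, List.countP_reverse]
    conv_rhs => rw [← sort_toFinset S (· ≤ ·), (S.sort_nodup _).card_eq_countP]
    exact List.countP_congr fun x _ => by simp
  rw [hdef, List.getD_eq_getElem _ _ (hlen ▸ hj), hsorted.getElem_le_iff_countP_le, hcount]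

theorem setLEF_iff_card_filter_le {n : ℕ} {S T : Finset (Fin n)} :
    setLEF n S T ↔ #S = #T ∧ ∀ y : ℕ, #{x ∈ S | y ≤ x.val} ≤ #{x ∈ T | y ≤ x.val} := by
  refine and_congr_right fun hST => ⟨fun h y => ?_, fun h j hj => ?_⟩
  · by_cases hy : #{x ∈ T | y ≤ x.val} < #S
    · rw [← jthLargestF_le_iff hy]
      exact (h _ hy).trans ((jthLargestF_le_iff (hST ▸ hy) y).2 le_rfl)
    · exact (card_filter_le _ _).trans (not_lt.1 hy)
  · rw [jthLargestF_le_iff hj]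
    exact (h _).trans ((jthLargestF_le_iff (hST ▸ hj) _).1 le_rfl)

section PrefixCount

variable {n : ℕ}

/-- The number of entries `≤ y` in the `c`-th column of `key β`. -/
def prefixCount (β : Fin n → ℕ) (c y : ℕ) : ℕ :=
  #{k ∈ col n β c | k.val < y}

theorem prefixCount_add_card_filter_le (β : Fin n → ℕ) (c y : ℕ) :
    prefixCount β c y + #{k ∈ col n β c | y ≤ k.val} = #(col n β c) := by
  simp only [prefixCount, ← not_lt]
  exact card_filter_add_card_filter_not _

theorem prefixCount_of_le (β : Fin n → ℕ) (c : ℕ) {y : ℕ} (hy : n ≤ y) :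
    prefixCount β c y = #(col n β c) := by
  rw [prefixCount, filter_true_of_mem fun k _ => k.isLt.trans_le hy]

theorem bruhatLE_iff_prefixCount {γ α : Fin n → ℕ} :
    bruhatLE n γ α ↔ ∀ c, 1 ≤ c →
      prefixCount γ c n = prefixCount α c n ∧ ∀ y, prefixCount α c y ≤ prefixCount γ c y := by
  refine forall₂_congr fun c _ => ?_
  rw [setLEF_iff_card_filter_le, prefixCount_of_le γ c le_rfl, prefixCount_of_le α c le_rfl]
  refine and_congr_right fun hcard => forall_congr' fun y => ?_
  have hγ := prefixCount_add_card_filter_le γ c y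
  have hα := prefixCount_add_card_filter_le α c y
  omega

theorem prefixCount_add_card_Ico (β : Fin n → ℕ) (c : ℕ) {y t : ℕ} (hyt : y ≤ t) :
    prefixCount β c y + #{k ∈ col n β c | y ≤ k.val ∧ k.val < t} = prefixCount β c t := by
  rw [prefixCount, prefixCount, ← card_union_of_disjoint (disjoint_filter.2 fun _ _ h => by omega),
    ← filter_or]
  congr 1
  exact filter_congr fun _ _ => by omega

theorem prefixCount_succ (β : Fin n → ℕ) (c : ℕ) (p : Fin n) :
    prefixCount β c (p.val + 1) = prefixCount β c p.val + if c ≤ β p then 1 else 0 := by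
  rw [← prefixCount_add_card_Ico β c (Nat.le_succ p.val)]
  congr 1
  have hIco : {k ∈ col n β c | p.val ≤ k.val ∧ k.val < p.val + 1} = {k ∈ col n β c | k = p} :=
    filter_congr fun k _ => by rw [Fin.ext_iff]; omega
  rw [hIco, filter_eq']
  split_ifs <;> simp_all [col]

theorem prefixCount_congr {γ α : Fin n → ℕ} {y : ℕ} (h : ∀ k : Fin n, k.val < y → γ k = α k)
    (c : ℕ) : prefixCount γ c y = prefixCount α c y := by
  simp only [prefixCount, col, filter_filter]
  exact congrArg card (filter_congr fun k _ => by
    constructor <;> rintro ⟨h1, h2⟩ <;> simp_all)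

theorem prefixCount_add_le_of_imp {β β' : Fin n → ℕ} {c c' y t : ℕ} (hyt : y ≤ t)
    (h : ∀ k : Fin n, y ≤ k.val → k.val < t → c ≤ β k → c' ≤ β' k) :
    prefixCount β c t + prefixCount β' c' y ≤ prefixCount β' c' t + prefixCount β c y := by
  rw [← prefixCount_add_card_Ico β c hyt, ← prefixCount_add_card_Ico β' c' hyt]
  have : #{k ∈ col n β c | y ≤ k.val ∧ k.val < t} ≤ #{k ∈ col n β' c' | y ≤ k.val ∧ k.val < t} :=
    card_le_card fun k hk => by
      simp only [col, mem_filter, mem_univ, true_and] at hk ⊢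
      exact ⟨h k hk.2.1 hk.2.2 hk.1, hk.2⟩
  omega

end PrefixCount

theorem Fintype.sum_add_add_eq_of_eq_of_ne {ι M : Type*} [Fintype ι] [DecidableEq ι]
    [AddCommMonoid M] {F G : ι → M} {i j : ι} (hij : i ≠ j)
    (h : ∀ k, k ≠ i → k ≠ j → F k = G k) :
    ∑ k, F k + (G i + G j) = ∑ k, G k + (F i + F j) := by
  have hcompl : ∑ k ∈ {i, j}ᶜ, F k = ∑ k ∈ {i, j}ᶜ, G k :=
    Finset.sum_congr rfl fun k hk => h k (by simp_all) (by simp_all)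
  rw [← sum_add_sum_compl {i, j} F, ← sum_add_sum_compl {i, j} G, sum_pair hij, sum_pair hij,
    hcompl]
  abel

section Swap

variable {n : ℕ} {β : Fin n → ℕ} {i j : Fin n}

theorem prefixCount_swap_add (hij : i < j) (c y : ℕ) :
    prefixCount (fun k => β (Equiv.swap i j k)) c y
        + (if i.val < y ∧ y ≤ j.val ∧ c ≤ β i then 1 else 0)
      = prefixCount β c y + (if i.val < y ∧ y ≤ j.val ∧ c ≤ β j then 1 else 0) := by
  let ind (β : Fin n → ℕ) (k l : Fin n) : ℕ := if l.val < y ∧ c ≤ β k then 1 else 0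
  have hcount (β : Fin n → ℕ) : prefixCount β c y = ∑ k, ind β k k := by
    simp only [prefixCount, col, filter_filter, card_filter, ind, and_comm]
  have hswap : prefixCount (fun k => β (Equiv.swap i j k)) c y
      = ∑ k, ind β k (Equiv.swap i j k) := by
    rw [hcount, ← Equiv.sum_comp (Equiv.swap i j)]
    simp only [ind, Equiv.swap_apply_self]
  have key := Fintype.sum_add_add_eq_of_eq_of_ne (F := fun k => ind β k (Equiv.swap i j k))
    (G := fun k => ind β k k) hij.ne fun k hi hj => by rw [Equiv.swap_apply_of_ne_of_ne hi hj]
  rw [hswap, hcount]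
  simp only [Equiv.swap_apply_left, Equiv.swap_apply_right, ind] at key ⊢
  have : i.val < j.val := hij
  split_ifs at key ⊢ <;> omega

theorem bruhatLE_of_leftSwapStep {γ α : Fin n → ℕ} (h : leftSwapStep n γ α) :
    bruhatLE n γ α := by
  obtain ⟨i, j, hij, hlt, rfl⟩ := h
  refine bruhatLE_iff_prefixCount.2 fun c _ => ⟨?_, fun y => ?_⟩
  · simpa [j.isLt.not_ge] using prefixCount_swap_add (β := α) hij c n
  · have := prefixCount_swap_add (β := α) hij c y
    split_ifs at this <;> omega

def weight (β : Fin n → ℕ) : ℕ := ∑ k : Fin n, (n - k.val) * β k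

theorem weight_lt_of_leftSwapStep {γ α : Fin n → ℕ} (h : leftSwapStep n γ α) :
    weight α < weight γ := by
  obtain ⟨i, j, hij, hlt, rfl⟩ := h
  have hswap : weight (fun k => α (Equiv.swap i j k))
      = ∑ k, (n - (Equiv.swap i j k).val) * α k := by
    rw [weight, ← Equiv.sum_comp (Equiv.swap i j)]
    simp only [Equiv.swap_apply_self]
  have key := Fintype.sum_add_add_eq_of_eq_of_ne
    (F := fun k => (n - (Equiv.swap i j k).val) * α k) (G := fun k => (n - k.val) * α k) hij.ne
    fun k hi hj => by rw [Equiv.swap_apply_of_ne_of_ne hi hj]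
  simp only [Equiv.swap_apply_left, Equiv.swap_apply_right] at key
  have hrearr := mul_add_mul_lt_mul_add_mul (a := n - j.val) (b := n - i.val) (c := α i)
    (d := α j) (by have := j.isLt; have : i.val < j.val := hij; omega) hlt
  rw [hswap, weight]
  omega

end Swap

theorem bruhatLE_refl (n : ℕ) (β : Fin n → ℕ) : bruhatLE n β β :=
  fun _ _ => ⟨rfl, fun _ _ => le_rfl⟩

theorem bruhatLE_trans {n : ℕ} {β₁ β₂ β₃ : Fin n → ℕ} (h₁ : bruhatLE n β₁ β₂)
    (h₂ : bruhatLE n β₂ β₃) : bruhatLE n β₁ β₃ := fun c hc =>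
  ⟨(h₁ c hc).1.trans (h₂ c hc).1,
    fun j hj => ((h₁ c hc).2 j hj).trans ((h₂ c hc).2 j ((h₁ c hc).1 ▸ hj))⟩

theorem bruhatLE_of_leftSwapLE {n : ℕ} {γ α : Fin n → ℕ} (h : leftSwapLE n γ α) :
    bruhatLE n γ α := by
  induction h with
  | refl => exact bruhatLE_refl n γ
  | tail _ hstep ih => exact bruhatLE_trans ih (bruhatLE_of_leftSwapStep hstep)

section Converse

variable {n : ℕ} {γ α : Fin n → ℕ}

theorem le_of_prefixCount_le_of_prefixCount_eq
    (hle : ∀ c, 1 ≤ c → ∀ y, prefixCount α c y ≤ prefixCount γ c y) {i : Fin n}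
    (hpre : ∀ c, prefixCount γ c i = prefixCount α c i) : α i ≤ γ i := by
  by_contra! h
  have := hle (α i) (by omega) (i.val + 1)
  rw [prefixCount_succ, prefixCount_succ, hpre, if_neg h.not_ge, if_pos le_rfl] at this
  omega

theorem exists_swap_partner (hle : ∀ c, 1 ≤ c → ∀ y, prefixCount α c y ≤ prefixCount γ c y)
    {w s : ℕ} (htot : prefixCount γ w n ≤ prefixCount α w n)
    (hgap : prefixCount α w s < prefixCount γ w s) :
    ∃ j : Fin n, s ≤ j.val ∧ γ j < w ∧ ∀ c, γ j < c → c ≤ w → ∀ y, s ≤ y → y ≤ j.val →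
      prefixCount α c y < prefixCount γ c y := by
  have hcatch : ∃ t, s ≤ t ∧ prefixCount γ w t ≤ prefixCount α w t :=
    ⟨max s n, le_max_left _ _, by
      rwa [prefixCount_of_le γ w (le_max_right _ _), prefixCount_of_le α w (le_max_right _ _),
        ← prefixCount_of_le γ w le_rfl, ← prefixCount_of_le α w le_rfl]⟩
  set t := Nat.find hcatch
  obtain ⟨hst, ht⟩ : s ≤ t ∧ prefixCount γ w t ≤ prefixCount α w t := Nat.find_spec hcatch
  have hahead : ∀ y, s ≤ y → y < t → prefixCount α w y < prefixCount γ w y := fun y hsy hyt =>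
    not_le.1 fun h => Nat.find_min hcatch hyt ⟨hsy, h⟩
  have hst : s < t := lt_of_le_of_ne hst fun h => by rw [← h] at ht; omega
  have htn : t - 1 < n := by
    by_contra! h
    have := hahead (t - 1) (by omega) (by omega)
    rw [prefixCount_of_le γ w h, prefixCount_of_le α w h,
      ← prefixCount_of_le γ w (h.trans (Nat.sub_le t 1)),
      ← prefixCount_of_le α w (h.trans (Nat.sub_le t 1))] at this
    omega
  have hcand : γ ⟨t - 1, htn⟩ < w := by
    have hγ := prefixCount_succ γ w ⟨t - 1, htn⟩
    have hα := prefixCount_succ α w ⟨t - 1, htn⟩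
    simp only [Nat.sub_add_cancel (show 1 ≤ t by omega)] at hγ hα
    have := hahead (t - 1) (by omega) (by omega)
    by_contra! h
    rw [if_pos h] at hγ
    split_ifs at hα <;> omega
  obtain ⟨j, hj, hjmax⟩ := exists_max_image {k : Fin n | s ≤ k.val ∧ k.val < t ∧ γ k < w} γ
    ⟨⟨t - 1, htn⟩, by simp only [mem_filter, mem_univ, true_and]; omega⟩
  simp only [mem_filter, mem_univ, true_and] at hj hjmax
  refine ⟨j, hj.1, hj.2.2, fun c hjc hcw y hsy hyj => not_le.1 fun hcon => ?_⟩
  -- On `[y, t)` no part of `γ` lies in `[c, w)`, so there column `c` of `γ` gains no more than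
  -- column `w`, while column `c` of `α` gains at least as much as column `w`: then `α` could not
  -- catch up with `γ` in column `w` at `t` without overtaking it in column `c`.
  have hγ : prefixCount γ c t + prefixCount γ w y ≤ prefixCount γ w t + prefixCount γ c y :=
    prefixCount_add_le_of_imp (by omega) fun k hyk hkt hck => by
      by_contra! hkw
      have := hjmax k ⟨by omega, hkt, hkw⟩
      omega
  have hα : prefixCount α w t + prefixCount α c y ≤ prefixCount α c t + prefixCount α w y :=
    prefixCount_add_le_of_imp (by omega) fun k _ _ hwk => hcw.trans hwk
  have := hahead y hsy (by omega)
  have := hle c (by omega) t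
  omega

theorem exists_leftSwapStep_of_bruhatLE (h : bruhatLE n γ α) (hne : γ ≠ α) :
    ∃ x, leftSwapStep n γ x ∧ bruhatLE n x α := by
  rw [bruhatLE_iff_prefixCount] at h
  have hle c hc := (h c hc).2
  obtain ⟨i, hi, hmin⟩ := exists_min_image {k | γ k ≠ α k} id
    (by simpa [Finset.Nonempty, funext_iff] using hne)
  simp only [mem_filter, mem_univ, true_and, id] at hi hmin
  have hpre := prefixCount_congr (y := i) fun k hk => by
    by_contra hk'
    exact absurd (hmin k hk') (not_le.2 hk)
  have hαγ : α i < γ i := lt_of_le_of_ne (le_of_prefixCount_le_of_prefixCount_eq hle hpre) hi.symm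
  have hgap : prefixCount α (γ i) (i.val + 1) < prefixCount γ (γ i) (i.val + 1) := by
    rw [prefixCount_succ, prefixCount_succ, hpre, if_neg (not_le.2 hαγ), if_pos le_rfl]
    omega
  obtain ⟨j, hsj, hji, hkey⟩ := exists_swap_partner hle (h (γ i) (by omega)).1.le hgap
  have hij : i < j := Fin.lt_def.2 (by omega)
  refine ⟨fun k => γ (Equiv.swap i j k), ⟨i, j, hij, by simpa using hji, by simp⟩,
    bruhatLE_iff_prefixCount.2 fun c hc => ⟨?_, fun y => ?_⟩⟩
  · simpa [j.isLt.not_ge, (h c hc).1] using prefixCount_swap_add (β := γ) hij c n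
  · have hswap := prefixCount_swap_add (β := γ) hij c y
    have := hle c hc y
    by_cases hmid : γ j < c ∧ c ≤ γ i ∧ i.val < y ∧ y ≤ j.val
    · have := hkey c hmid.1 hmid.2.1 y (by omega) hmid.2.2.2
      split_ifs at hswap <;> omega
    · split_ifs at hswap <;> omega

end Converse

theorem leftSwapLE_of_bruhatLE {n : ℕ} {γ α : Fin n → ℕ} (h : bruhatLE n γ α) :
    leftSwapLE n γ α := by
  by_cases hγα : γ = α
  · exact hγα ▸ Relation.ReflTransGen.refl
  obtain ⟨x, hstep, hx⟩ := exists_leftSwapStep_of_bruhatLE h hγα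
  have := weight_lt_of_leftSwapStep hstep
  exact .head hstep (leftSwapLE_of_bruhatLE hx)
termination_by weight γ

/-- left swap order coincides with Bruhat order. -/
theorem stmt9 (n : ℕ) (α γ : Fin n → ℕ) :
    leftSwapLE n γ α ↔ bruhatLE n γ α :=
  ⟨bruhatLE_of_leftSwapLE, leftSwapLE_of_bruhatLE⟩
end

section
/- Let α be a weak composition of length n and S ⊆ [n] with S ≤ supp(α). Then M(α, S) exists and M(α, S) ⪯ α in the left swap order (equivalently, M(α, S) ≤ α in Bruhat order). -/
/-!
Both parts run through the counting form of the order on sets: `S ≤ T` iff `#S = #T` and every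
initial segment `[0, x)` contains at least as many elements of `S` as of `T`.

For each `c ≥ 1`, the largest subset of `S` below the column `col α c` is built greedily from the
top; since `S ≤ supp α`, it exists and has the right size. These sets shrink as `c` grows, so they
are the columns of a weak composition, which is then the Bruhat maximum `M(α, S)`.

If `μ < α` in Bruhat order, let `q` be the first position with `μ q < α q`. The defect
`#(col μ c ∩ [0, x)) - #(col α c ∩ [0, x))` is nonnegative, nondecreasing in `x ≤ q`, and
positive at `x = q` for the levels `c ∈ (μ q, α q]`. Where it becomes positive for all these levels
one finds `p < q` with `α p < α q` and the defect positive on the whole box `(α p, α q] × (p, q]`.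
Swapping `α p` and `α q` raises the counts by at most one, and only on that box, so `μ` stays
below the swapped composition, while the weight `∑ i * α i` drops; induct on the weight.
-/

open Finset

lemma Nat.exists_lt_not_and_succ {P : ℕ → Prop} (h0 : ¬ P 0) {q : ℕ} (hq : P q) :
    ∃ p < q, ¬ P p ∧ P (p + 1) := by
  induction q with
  | zero => exact absurd hq h0
  | succ q ih =>
    by_cases h : P q
    · obtain ⟨p, hp, hpP⟩ := ih h
      exact ⟨p, by omega, hpP⟩
    · exact ⟨q, by omega, h, hq⟩

namespace WeakComposition

variable {n : ℕ}

def countBelow (A : Finset (Fin n)) (x : ℕ) : ℤ :=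
  #(A.filter fun i : Fin n => (i : ℕ) < x)

@[simp]
lemma countBelow_zero (A : Finset (Fin n)) : countBelow A 0 = 0 := by
  simp [countBelow]

lemma countBelow_eq_card (A : Finset (Fin n)) {x : ℕ} (hx : n ≤ x) : countBelow A x = #A := by
  rw [countBelow, filter_true_of_mem fun (i : Fin n) _ => i.isLt.trans_le hx]

lemma countBelow_le_card (A : Finset (Fin n)) (x : ℕ) : countBelow A x ≤ #A := by
  unfold countBelow
  exact_mod_cast card_filter_le _ _

lemma countBelow_succ (A : Finset (Fin n)) (i : Fin n) :
    countBelow A (i + 1) = countBelow A i + if i ∈ A then 1 else 0 := by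
  have : A.filter (fun j : Fin n => (j : ℕ) < i + 1) =
      A.filter (fun j : Fin n => (j : ℕ) < i) ∪ A.filter (· = i) := by
    ext j; simp only [mem_filter, mem_union, Nat.lt_succ_iff_lt_or_eq, Fin.val_inj]; tauto
  rw [countBelow, countBelow, this, card_union_of_disjoint, filter_eq']
  · split_ifs <;> simp
  · exact disjoint_filter.2 fun j _ h1 h2 => by omega

lemma countBelow_sub_countBelow (A : Finset (Fin n)) {x y : ℕ} (hxy : x ≤ y) :
    countBelow A y - countBelow A x =
      #(A.filter fun i : Fin n => x ≤ (i : ℕ) ∧ (i : ℕ) < y) := by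
  have := card_filter_add_card_filter_not (s := A.filter fun i : Fin n => (i : ℕ) < y)
    (fun i : Fin n => (i : ℕ) < x)
  simp only [filter_filter] at this
  rw [countBelow, countBelow, ← this]
  have e1 : A.filter (fun i : Fin n => (i : ℕ) < y ∧ (i : ℕ) < x) =
      A.filter (fun i : Fin n => (i : ℕ) < x) :=
    filter_congr fun i _ => by omega
  have e2 : A.filter (fun i : Fin n => (i : ℕ) < y ∧ ¬ (i : ℕ) < x) =
      A.filter (fun i : Fin n => x ≤ (i : ℕ) ∧ (i : ℕ) < y) :=
    filter_congr fun i _ => by omega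
  rw [e1, e2]; push_cast; ring

lemma countBelow_sub_le_of_forall_mem {A B : Finset (Fin n)} {x y : ℕ}
    (hAB : ∀ i ∈ A, (i : ℕ) < y → i ∈ B) (hxy : x ≤ y) :
    countBelow A y - countBelow A x ≤ countBelow B y - countBelow B x := by
  rw [countBelow_sub_countBelow A hxy, countBelow_sub_countBelow B hxy]
  exact_mod_cast card_le_card fun i hi => by
    simp only [mem_filter] at hi ⊢; exact ⟨hAB i hi.1 hi.2.2, hi.2⟩

lemma countBelow_sub_le_of_subset {A B : Finset (Fin n)} (hAB : A ⊆ B) {x y : ℕ}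
    (hxy : x ≤ y) :
    countBelow A y - countBelow A x ≤ countBelow B y - countBelow B x :=
  countBelow_sub_le_of_forall_mem (fun _ hi _ => hAB hi) hxy

lemma countBelow_nonneg (A : Finset (Fin n)) (x : ℕ) : 0 ≤ countBelow A x := by
  unfold countBelow; positivity

lemma jthLargestF_eq_orderEmbOfFin (S : Finset (Fin n)) {m : ℕ} (h : #S = m) {j : ℕ}
    (hj : j < m) :
    jthLargestF n S j = S.orderEmbOfFin h ⟨m - 1 - j, by omega⟩ + 1 := by
  subst h
  simp [jthLargestF, orderEmbOfFin_apply, ← List.map_eq_flatMap, List.getElem_reverse, hj]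

lemma orderEmbOfFin_lt_iff_lt_countBelow (S : Finset (Fin n)) {m : ℕ} (h : #S = m) (k : Fin m)
    (x : ℕ) :
    (S.orderEmbOfFin h k : ℕ) < x ↔ (k : ℤ) < countBelow S x := by
  set f := S.orderEmbOfFin h
  constructor
  · intro hk
    have : (Iic k).map f.toEmbedding ⊆ S.filter fun i : Fin n => (i : ℕ) < x := fun i hi => by
      obtain ⟨j, hj, rfl⟩ := mem_map.1 hi
      exact mem_filter.2 ⟨orderEmbOfFin_mem S h j,
        lt_of_le_of_lt (Fin.le_def.1 (f.monotone (mem_Iic.1 hj))) hk⟩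
    have := card_le_card this
    rw [card_map, Fin.card_Iic] at this
    rw [countBelow]
    omega
  · intro hk
    by_contra! hxk
    have : (S.filter fun i : Fin n => (i : ℕ) < x) ⊆ (Iio k).map f.toEmbedding := fun i hi => by
      obtain ⟨hiS, hix⟩ := mem_filter.1 hi
      obtain ⟨j, rfl⟩ : i ∈ Set.range f := by rwa [range_orderEmbOfFin]
      exact mem_map_of_mem _ (mem_Iio.2 (f.lt_iff_lt.1 (Fin.lt_def.2 (by omega))))
    have := card_le_card this
    rw [card_map, Fin.card_Iio] at this
    rw [countBelow] at hk
    omega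

lemma setLEF_iff_countBelow (S T : Finset (Fin n)) :
    setLEF n S T ↔ #S = #T ∧ ∀ x, countBelow T x ≤ countBelow S x := by
  refine ⟨fun ⟨hST, hle⟩ => ⟨hST, fun x => ?_⟩,
    fun ⟨hST, hle⟩ => ⟨hST, fun j hj => ?_⟩⟩
  · by_contra! hx
    have hT := countBelow_le_card T x
    have hS := countBelow_nonneg S x
    set k : Fin #S := ⟨(countBelow S x).toNat, by omega⟩
    have := hle (#S - 1 - k) (by omega)
    rw [jthLargestF_eq_orderEmbOfFin S rfl (by omega),
      jthLargestF_eq_orderEmbOfFin T hST.symm (by omega)] at this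
    have hk : (⟨#S - 1 - (#S - 1 - k), by omega⟩ : Fin #S) = k := Fin.ext (by simp only; omega)
    rw [hk] at this
    have h1 := (orderEmbOfFin_lt_iff_lt_countBelow S rfl k x).not.2 (by simp [k])
    have h2 := (orderEmbOfFin_lt_iff_lt_countBelow T hST.symm k x).2 (by simp [k]; omega)
    omega
  · rw [jthLargestF_eq_orderEmbOfFin S rfl hj, jthLargestF_eq_orderEmbOfFin T hST.symm hj]
    set k : Fin #S := ⟨#S - 1 - j, by omega⟩
    have h1 := (orderEmbOfFin_lt_iff_lt_countBelow T hST.symm k _).1 (Nat.lt_succ_self _)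
    have h2 := (orderEmbOfFin_lt_iff_lt_countBelow S rfl k _).2 (h1.trans_le (hle _))
    omega

@[simp]
lemma mem_col {γ : Fin n → ℕ} {c : ℕ} {i : Fin n} : i ∈ col n γ c ↔ c ≤ γ i := by
  simp [col]

lemma col_antitone (γ : Fin n → ℕ) : Antitone (col n γ) :=
  fun _ _ h _ hi => mem_col.2 (h.trans (mem_col.1 hi))

lemma suppC_eq_col_one (γ : Fin n → ℕ) : suppC n γ = col n γ 1 := by
  ext i; simp [suppC, Nat.one_le_iff_ne_zero, Nat.pos_iff_ne_zero]

lemma col_subset_suppC (γ : Fin n → ℕ) {c : ℕ} (hc : 1 ≤ c) : col n γ c ⊆ suppC n γ :=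
  suppC_eq_col_one γ ▸ col_antitone γ hc

lemma bruhatLE_iff_countBelow {γ α : Fin n → ℕ} :
    bruhatLE n γ α ↔ ∀ c, 1 ≤ c → #(col n γ c) = #(col n α c) ∧
      ∀ x, countBelow (col n α c) x ≤ countBelow (col n γ c) x := by
  simp only [bruhatLE, setLEF_iff_countBelow]

-- The largest subset of `S` lying below `T` (when there is one): `i ∈ S` is kept iff some
-- interval `[i, y)` contains no more elements of `S` than of `T`.
open Classical in
noncomputable def greedy (T S : Finset (Fin n)) : Finset (Fin n) :=
  S.filter fun i => ∃ y, (i : ℕ) < y ∧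
    countBelow S y - countBelow S i ≤ countBelow T y - countBelow T i

lemma mem_greedy {T S : Finset (Fin n)} {i : Fin n} :
    i ∈ greedy T S ↔ i ∈ S ∧ ∃ y, (i : ℕ) < y ∧
      countBelow S y - countBelow S i ≤ countBelow T y - countBelow T i := by
  simp [greedy]

lemma greedy_mono {T T' : Finset (Fin n)} (h : T' ⊆ T) (S : Finset (Fin n)) :
    greedy T' S ⊆ greedy T S := fun i hi => by
  obtain ⟨hiS, y, hiy, hy⟩ := mem_greedy.1 hi
  exact mem_greedy.2 ⟨hiS, y, hiy, hy.trans (countBelow_sub_le_of_subset h hiy.le)⟩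

-- `greedy T S` has as many elements `≥ x` as the minimum over `y ≥ x` of
-- `#(T ∩ [y, n)) + #(S ∩ [x, y))`.
lemma card_sub_countBelow_greedy (T S : Finset (Fin n)) (x : ℕ) :
    (∀ y, x ≤ y → #(greedy T S) - countBelow (greedy T S) x ≤
      #T - countBelow T y + (countBelow S y - countBelow S x)) ∧
    ∃ y, x ≤ y ∧ #(greedy T S) - countBelow (greedy T S) x =
      #T - countBelow T y + (countBelow S y - countBelow S x) := by
  set B := greedy T S
  induction hk : n - x generalizing x with
  | zero =>
    have hx : n ≤ x := by omega
    refine ⟨fun y hy => ?_, x, le_rfl, ?_⟩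
    · simp [countBelow_eq_card _ hx, countBelow_eq_card _ (hx.trans hy)]
    · simp [countBelow_eq_card _ hx]
  | succ k ih =>
    obtain ⟨ih_le, y₀, hy₀, ih_eq⟩ := ih (x + 1) (by omega)
    let i : Fin n := ⟨x, by omega⟩
    have hB := countBelow_succ B i
    have hS := countBelow_succ S i
    have hT := countBelow_succ T i
    simp only [i] at hB hS hT
    by_cases hiB : i ∈ B
    · obtain ⟨hiS, y₁, hy₁, hy₁le⟩ := mem_greedy.1 hiB
      rw [if_pos hiB] at hB
      rw [if_pos hiS] at hS
      refine ⟨fun y hy => ?_, y₀, by omega, by linarith⟩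
      rcases hy.eq_or_lt with rfl | hy
      · linarith [ih_le y₁ hy₁]
      · linarith [ih_le y hy]
    · rw [if_neg hiB] at hB
      have hle : ∀ y, x ≤ y → #B - countBelow B x ≤
          #T - countBelow T y + (countBelow S y - countBelow S x) := by
        intro y hy
        rcases hy.eq_or_lt with rfl | hy
        · have := ih_le (x + 1) le_rfl
          split_ifs at hS hT <;> linarith
        · have := ih_le y hy
          split_ifs at hS <;> linarith
      refine ⟨hle, ?_⟩
      by_cases hiS : i ∈ S
      · refine ⟨x, le_rfl, le_antisymm (hle x le_rfl) ?_⟩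
        have : ¬ _ := fun h => hiB (mem_greedy.2 ⟨hiS, y₀, hy₀, h⟩)
        rw [if_pos hiS] at hS
        simp only [i] at this
        linarith
      · rw [if_neg hiS] at hS
        exact ⟨y₀, by omega, by linarith⟩

lemma card_greedy {T S : Finset (Fin n)} (hTS : ∀ y, countBelow T y ≤ countBelow S y) :
    #(greedy T S) = #T := by
  obtain ⟨hle, y, -, heq⟩ := card_sub_countBelow_greedy T S 0
  have hle₀ := hle 0 le_rfl
  simp only [countBelow_zero] at hle₀ heq
  have := hTS y
  omega

lemma setLEF_greedy {T S : Finset (Fin n)} (hTS : ∀ y, countBelow T y ≤ countBelow S y) :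
    setLEF n (greedy T S) T := by
  refine (setLEF_iff_countBelow _ _).2 ⟨card_greedy hTS, fun x => ?_⟩
  have := (card_sub_countBelow_greedy T S x).1 x le_rfl
  have := card_greedy hTS
  linarith

lemma setLEF_greedy_of_subset {T S A : Finset (Fin n)}
    (hTS : ∀ y, countBelow T y ≤ countBelow S y) (hAS : A ⊆ S) (hAT : setLEF n A T) :
    setLEF n A (greedy T S) := by
  obtain ⟨hAT, hcount⟩ := (setLEF_iff_countBelow _ _).1 hAT
  refine (setLEF_iff_countBelow _ _).2 ⟨hAT.trans (card_greedy hTS).symm, fun x => ?_⟩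
  obtain ⟨y, hxy, heq⟩ := (card_sub_countBelow_greedy T S x).2
  have := countBelow_sub_le_of_subset hAS hxy
  have := hcount y
  have := card_greedy hTS
  have : (#A : ℤ) = #T := by exact_mod_cast hAT
  linarith

lemma col_findGreatest {B : ℕ → Finset (Fin n)} (hB : Antitone B) {V : ℕ}
    (hV : ∀ c, V < c → B c = ∅) {c : ℕ} (hc : 1 ≤ c) :
    col n (fun i => Nat.findGreatest (fun c => i ∈ B c) V) c = B c := by
  ext i
  simp only [mem_col]
  constructor
  · intro h
    have h0 : Nat.findGreatest (fun c => i ∈ B c) V ≠ 0 := by omega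
    exact hB h (Nat.findGreatest_of_ne_zero rfl h0)
  · intro hi
    refine Nat.le_findGreatest ?_ hi
    by_contra! hVc
    simp [hV c hVc] at hi

lemma exists_isBruhatMax (α : Fin n → ℕ) (S : Finset (Fin n))
    (hS : setLEF n S (suppC n α)) :
    ∃ μ, isBruhatMax n α S μ := by
  have hfeas : ∀ c, 1 ≤ c → ∀ y, countBelow (col n α c) y ≤ countBelow S y := by
    intro c hc y
    have hsub := countBelow_sub_le_of_subset (col_subset_suppC α hc) (Nat.zero_le y)
    simp only [countBelow_zero, sub_zero] at hsub
    linarith [((setLEF_iff_countBelow _ _).1 hS).2 y]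
  set B := fun c => greedy (col n α c) S
  have hB : Antitone B := fun c c' h => greedy_mono (col_antitone α h) S
  have hV : ∀ c, univ.sup α < c → B c = ∅ := fun c hc => by
    have hcol : col n α c = ∅ := by
      ext i; simpa using lt_of_le_of_lt (le_sup (mem_univ i)) hc
    rw [← card_eq_zero, card_greedy (hfeas c (by omega)), hcol, card_empty]
  have hμ := fun c (hc : 1 ≤ c) => col_findGreatest hB hV hc
  refine ⟨fun i => Nat.findGreatest (fun c => i ∈ B c) (univ.sup α), fun c hc => ?_, ?_,
    fun γ hγ hγS c hc => ?_⟩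
  · rw [hμ c hc]
    exact setLEF_greedy (hfeas c hc)
  · rw [suppC_eq_col_one, hμ 1 le_rfl]
    exact fun i hi => (mem_greedy.1 hi).1
  · rw [hμ c hc]
    exact setLEF_greedy_of_subset (hfeas c hc) ((col_subset_suppC γ hc).trans hγS) (hγ c hc)

def weightedSum (α : Fin n → ℕ) : ℕ := ∑ i : Fin n, (i : ℕ) * α i

lemma weightedSum_lt_of_leftSwapStep {β α : Fin n → ℕ} (h : leftSwapStep n β α) :
    weightedSum β < weightedSum α := by
  obtain ⟨p, q, hpq, hα, rfl⟩ := h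
  have hreindex : weightedSum (fun k => α (Equiv.swap p q k)) =
      ∑ j, (Equiv.swap p q j : ℕ) * α j := by
    rw [weightedSum, ← Equiv.sum_comp (Equiv.swap p q)]
    simp only [Equiv.swap_apply_self]
  have hdiff : ∑ j : Fin n, ((j : ℤ) * α j - (Equiv.swap p q j : ℕ) * α j) =
      ((q : ℤ) - p) * (α q - α p) := by
    rw [Fintype.sum_eq_add p q hpq.ne fun j hj => by
      simp [Equiv.swap_apply_of_ne_of_ne hj.1 hj.2]]
    simp only [Equiv.swap_apply_left, Equiv.swap_apply_right]
    ring
  have hpos : 0 < ((q : ℤ) - p) * (α q - α p) :=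
    mul_pos (by simpa using hpq) (by simpa using hα)
  rw [← Nat.cast_lt (α := ℤ), hreindex, weightedSum]
  push_cast
  rw [sum_sub_distrib] at hdiff
  linarith

lemma card_col_swap (α : Fin n → ℕ) (p q : Fin n) (c : ℕ) :
    #(col n (fun k => α (Equiv.swap p q k)) c) = #(col n α c) :=
  card_equiv (Equiv.swap p q) fun _ => by simp

lemma countBelow_col_eq_sum (γ : Fin n → ℕ) (c x : ℕ) :
    countBelow (col n γ c) x = ∑ i, if c ≤ γ i ∧ (i : ℕ) < x then 1 else 0 := by
  simp only [countBelow, col, filter_filter, natCast_card_filter]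

lemma countBelow_col_swap_le (α : Fin n → ℕ) {p q : Fin n} (hpq : p < q) (c x : ℕ) :
    countBelow (col n (fun k => α (Equiv.swap p q k)) c) x ≤ countBelow (col n α c) x +
      if α p < c ∧ c ≤ α q ∧ (p : ℕ) < x ∧ x ≤ q then 1 else 0 := by
  set f : Fin n → ℤ := fun j => if c ≤ α j ∧ (Equiv.swap p q j : ℕ) < x then 1 else 0
  set g : Fin n → ℤ := fun j => if c ≤ α j ∧ (j : ℕ) < x then 1 else 0
  have hreindex : countBelow (col n (fun k => α (Equiv.swap p q k)) c) x = ∑ j, f j := by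
    rw [countBelow_col_eq_sum, ← Equiv.sum_comp (Equiv.swap p q)]
    simp only [f, Equiv.swap_apply_self]
  have hdiff : ∑ j, (f j - g j) = (f p - g p) + (f q - g q) :=
    Fintype.sum_eq_add p q hpq.ne fun j hj => by
      simp [f, g, Equiv.swap_apply_of_ne_of_ne hj.1 hj.2]
  rw [sum_sub_distrib, ← hreindex,
    show ∑ j, g j = countBelow (col n α c) x from (countBelow_col_eq_sum α c x).symm] at hdiff
  simp only [f, g, Equiv.swap_apply_left, Equiv.swap_apply_right] at hdiff
  have : (p : ℕ) < q := hpq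
  split_ifs at hdiff ⊢ <;> omega

lemma bruhatLE_swap {μ α : Fin n → ℕ} (h : bruhatLE n μ α) {p q : Fin n} (hpq : p < q)
    (hbox : ∀ c x, α p < c → c ≤ α q → (p : ℕ) < x → x ≤ q →
      countBelow (col n α c) x < countBelow (col n μ c) x) :
    bruhatLE n μ fun k => α (Equiv.swap p q k) := by
  rw [bruhatLE_iff_countBelow] at h ⊢
  refine fun c hc => ⟨(h c hc).1.trans (card_col_swap α p q c).symm, fun x => ?_⟩
  have hswap := countBelow_col_swap_le α hpq c x
  split_ifs at hswap with hcx
  · linarith [hbox c x hcx.1 hcx.2.1 hcx.2.2.1 hcx.2.2.2]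
  · linarith [(h c hc).2 x]

lemma exists_first_lt_of_bruhatLE {μ α : Fin n → ℕ} (h : bruhatLE n μ α) (hne : μ ≠ α) :
    ∃ q, μ q < α q ∧ ∀ i < q, α i ≤ μ i := by
  have hex : ∃ i, μ i < α i := by
    by_contra! hle
    obtain ⟨i, hi⟩ := Function.ne_iff.1 hne
    have hlt : α i < μ i := (hle i).lt_of_ne' hi
    have hsub : col n α (α i + 1) ⊆ col n μ (α i + 1) :=
      fun j hj => mem_col.2 ((mem_col.1 hj).trans (hle j))
    have heq := eq_of_subset_of_card_le hsub
      ((bruhatLE_iff_countBelow.1 h (α i + 1) (by omega)).1.le)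
    have : i ∈ col n α (α i + 1) := heq ▸ mem_col.2 hlt
    simp at this
  obtain ⟨q, hq, hmin⟩ := wellFounded_lt.has_min {i | μ i < α i} hex
  exact ⟨q, hq, fun i hi => not_lt.1 fun h' => hmin i h' hi⟩

lemma countBelow_col_sub_le_of_forall_lt {μ α : Fin n → ℕ} {q : Fin n}
    (hmin : ∀ i < q, α i ≤ μ i) (c : ℕ) {x y : ℕ} (hxy : x ≤ y) (hyq : y ≤ q) :
    countBelow (col n α c) y - countBelow (col n α c) x ≤
      countBelow (col n μ c) y - countBelow (col n μ c) x :=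
  countBelow_sub_le_of_forall_mem
    (fun i hi hiy => mem_col.2 ((mem_col.1 hi).trans (hmin i (Fin.lt_def.2 (by omega))))) hxy

lemma exists_swap_partner {μ α : Fin n → ℕ} (h : bruhatLE n μ α) {q : Fin n}
    (hq : μ q < α q) (hmin : ∀ i < q, α i ≤ μ i) :
    ∃ p < q, α p < α q ∧ ∀ c x, α p < c → c ≤ α q → (p : ℕ) < x → x ≤ q →
      countBelow (col n α c) x < countBelow (col n μ c) x := by
  rw [bruhatLE_iff_countBelow] at h
  set P : ℕ → Prop := fun x => ∀ c, μ q < c → c ≤ α q →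
    countBelow (col n α c) x < countBelow (col n μ c) x
  have hP0 : ¬ P 0 := fun h0 => by simpa using h0 (α q) hq le_rfl
  have hPq : P q := fun c hc₁ hc₂ => by
    have := (h c (by omega)).2 (q + 1)
    rw [countBelow_succ, countBelow_succ, if_pos (mem_col.2 hc₂),
      if_neg (by simpa using hc₁)] at this
    linarith
  -- `p + 1` is a position where the defect `countBelow (col n μ c) - countBelow (col n α c)` has
  -- just become positive at every level `c ∈ (μ q, α q]`; it is monotone on `[0, q]`.
  obtain ⟨p, hpq, hPp, hPp₁⟩ := Nat.exists_lt_not_and_succ hP0 hPq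
  obtain ⟨c₀, hc₀, hc₀q, hc₀p⟩ : ∃ c₀, μ q < c₀ ∧ c₀ ≤ α q ∧
      countBelow (col n μ c₀) p ≤ countBelow (col n α c₀) p := by
    simpa [P] using hPp
  set p' : Fin n := ⟨p, by omega⟩
  have hp' : (p' : ℕ) = p := rfl
  have hrise := hPp₁ c₀ hc₀ hc₀q
  rw [← hp', countBelow_succ, countBelow_succ] at hrise
  rw [← hp'] at hc₀p
  have := (h c₀ (by omega)).2 p'
  have hαp : p' ∉ col n α c₀ ∧ p' ∈ col n μ c₀ := by
    constructor
    · intro h₁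
      rw [if_pos h₁] at hrise
      split_ifs at hrise <;> linarith
    · by_contra h₂
      rw [if_neg h₂] at hrise
      split_ifs at hrise <;> linarith
  simp only [mem_col, not_le] at hαp
  refine ⟨p', Fin.lt_def.2 hpq, by omega, fun c x hc₁ hc₂ hx₁ hx₂ => ?_⟩
  have hstart : countBelow (col n α c) (p + 1) < countBelow (col n μ c) (p + 1) := by
    by_cases hc : c ≤ c₀
    · have := (h c (by omega)).2 p
      rw [← hp', countBelow_succ, countBelow_succ, if_neg (by simpa using hc₁),
        if_pos (mem_col.2 (hc.trans hαp.2))]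
      linarith
    · exact hPp₁ c (by omega) hc₂
  linarith [countBelow_col_sub_le_of_forall_lt hmin c hx₁ hx₂]

lemma exists_leftSwapStep_of_bruhatLE {μ α : Fin n → ℕ} (h : bruhatLE n μ α)
    (hne : μ ≠ α) :
    ∃ β, leftSwapStep n β α ∧ bruhatLE n μ β := by
  obtain ⟨q, hq, hmin⟩ := exists_first_lt_of_bruhatLE h hne
  obtain ⟨p, hpq, hαpq, hbox⟩ := exists_swap_partner h hq hmin
  exact ⟨_, ⟨p, q, hpq, hαpq, rfl⟩, bruhatLE_swap h hpq hbox⟩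

lemma leftSwapLE_of_bruhatLE {μ α : Fin n → ℕ} (h : bruhatLE n μ α) :
    leftSwapLE n μ α := by
  induction hw : weightedSum α using Nat.strong_induction_on generalizing α with
  | _ w ih =>
    by_cases hne : μ = α
    · exact hne ▸ Relation.ReflTransGen.refl
    obtain ⟨β, hstep, hβ⟩ := exists_leftSwapStep_of_bruhatLE h hne
    exact (ih _ (hw ▸ weightedSum_lt_of_leftSwapStep hstep) hβ rfl).tail hstep

end WeakComposition

/-- if `S ≤ supp α` then `M(α, S)` exists and `M(α, S) ⪯ α` in the
left swap order. -/
theorem stmt11 (n : ℕ) (α : Fin n → ℕ) (S : Finset (Fin n))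
    (hS : setLEF n S (suppC n α)) :
    (∃ μ : Fin n → ℕ, isBruhatMax n α S μ) ∧
    (∀ μ : Fin n → ℕ, isBruhatMax n α S μ → leftSwapLE n μ α) :=
  ⟨WeakComposition.exists_isBruhatMax α S hS,
    fun _ hμ => WeakComposition.leftSwapLE_of_bruhatLE hμ.1⟩
end

section
/- Let C₁, C₂ be two strictly decreasing sequences (viewed as sets of positive integers) representing adjacent columns of a reverse semistandard Young tableau, with |C₁| ≥ |C₂|, and define C₁ ◁ C₂ = {b₁ < b₂ < ... < b_m} where C₂ = {a₁ < ... < a_m}, b₁ is the smallest element of C₁ with b₁ ≥ a₁, and inductively b_k is the smallest element of C₁ with b_k ≥ a_k and b_k > b_{k-1}. Then C₁ ◁ C₂ is well-defined (each b_k exists) and C₁ ◁ C₂ ≥ C₂ (i.e., b_k ≥ a_k for all k). -/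
/-!
Choose `b` greedily: `b k` is the least element of `C₁` that is at least the `k`-th smallest
element `a k` of `C₂` and exceeds `b 0, …, b (k-1)`. Read from the bottom, the row condition
says that the `k`-th smallest element of `C₂` is at most `u k`, the `k`-th of the `|C₂|` largest
elements of `C₁`. Since `u` is strictly increasing, induction on `k` shows that `u k` is always a
candidate for `b k`, so the greedy choice never runs out, and minimality holds by construction.
-/

lemma jthSmallestN_mem (S : Finset ℕ) {j : ℕ} (h : j < S.card) : jthSmallestN S j ∈ S := by
  have hl : j < (Finset.sort S (· ≤ ·)).length := by rwa [Finset.length_sort]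
  rw [jthSmallestN, List.getD_eq_getElem _ _ hl]
  exact (Finset.mem_sort _).mp (List.getElem_mem hl)

lemma jthSmallestN_lt_jthSmallestN (S : Finset ℕ) {i j : ℕ} (hij : i < j) (h : j < S.card) :
    jthSmallestN S i < jthSmallestN S j := by
  have hj : j < (Finset.sort S (· ≤ ·)).length := by rwa [Finset.length_sort]
  have hi : i < (Finset.sort S (· ≤ ·)).length := hij.trans hj
  rw [jthSmallestN, jthSmallestN, List.getD_eq_getElem _ _ hj, List.getD_eq_getElem _ _ hi]
  exact List.pairwise_iff_getElem.mp (Finset.sortedLT_sort S).pairwise i j hi hj hij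

lemma jthLargestN_eq_jthSmallestN (S : Finset ℕ) {j : ℕ} (h : j < S.card) :
    jthLargestN S j = jthSmallestN S (S.card - 1 - j) := by
  have hl : j < (Finset.sort S (· ≤ ·)).reverse.length := by
    rwa [List.length_reverse, Finset.length_sort]
  have hl' : S.card - 1 - j < (Finset.sort S (· ≤ ·)).length := by
    rw [Finset.length_sort]; omega
  rw [jthLargestN, jthSmallestN, List.getD_eq_getElem _ _ hl, List.getD_eq_getElem _ _ hl',
    List.getElem_reverse]
  simp only [Finset.length_sort]

lemma jthSmallestN_le_jthSmallestN_of_jthLargestN_le {S T : Finset ℕ} (hcard : S.card ≤ T.card)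
    (hdom : ∀ k < S.card, jthLargestN S k ≤ jthLargestN T k) {k : ℕ} (hk : k < S.card) :
    jthSmallestN S k ≤ jthSmallestN T (T.card - S.card + k) := by
  have h := hdom (S.card - 1 - k) (by omega)
  rw [jthLargestN_eq_jthSmallestN S (by omega), jthLargestN_eq_jthSmallestN T (by omega)] at h
  rwa [show S.card - 1 - (S.card - 1 - k) = k by omega,
    show T.card - 1 - (S.card - 1 - k) = T.card - S.card + k by omega] at h

section Greedy

variable {α : Type*} [LinearOrder α] [Inhabited α] (C : Finset α) (a : ℕ → α)

-- `default` when there is no candidate.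
def greedy (k : ℕ) : α :=
  ((C.filter fun c => a k ≤ c ∧ ∀ j : Fin k, greedy j < c).min).getD default
termination_by k
decreasing_by all_goals exact Fin.is_lt _

def greedyCandidates (k : ℕ) : Finset α :=
  C.filter fun c => a k ≤ c ∧ ∀ j : Fin k, greedy C a j < c

variable {C a}

lemma mem_greedyCandidates {k : ℕ} {c : α} :
    c ∈ greedyCandidates C a k ↔ c ∈ C ∧ a k ≤ c ∧ ∀ j : Fin k, greedy C a j < c :=
  Finset.mem_filter

lemma greedy_eq_min' {k : ℕ} (h : (greedyCandidates C a k).Nonempty) :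
    greedy C a k = (greedyCandidates C a k).min' h := by
  rw [greedy, ← greedyCandidates, ← Finset.coe_min' h]
  rfl

lemma greedy_mem_greedyCandidates {k : ℕ} (h : (greedyCandidates C a k).Nonempty) :
    greedy C a k ∈ greedyCandidates C a k := by
  rw [greedy_eq_min' h]
  exact Finset.min'_mem _ h

lemma greedy_le_of_mem_greedyCandidates {k : ℕ} {c : α} (hc : c ∈ greedyCandidates C a k) :
    greedy C a k ≤ c := by
  rw [greedy_eq_min' ⟨c, hc⟩]
  exact Finset.min'_le _ _ hc

lemma greedy_mem_greedyCandidates_and_le_of_bound {u : ℕ → α} {m : ℕ}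
    (hu_mem : ∀ k < m, u k ∈ C) (hu_mono : StrictMonoOn u (Set.Iio m))
    (hau : ∀ k < m, a k ≤ u k) :
    ∀ k < m, greedy C a k ∈ greedyCandidates C a k ∧ greedy C a k ≤ u k := by
  intro k
  induction k using Nat.strong_induction_on with
  | _ k ih =>
    intro hk
    have hu : u k ∈ greedyCandidates C a k := by
      refine mem_greedyCandidates.mpr ⟨hu_mem k hk, hau k hk, fun j => ?_⟩
      have hjk : (j : ℕ) < k := j.is_lt
      calc greedy C a j ≤ u j := (ih j hjk (hjk.trans hk)).2
        _ < u k := hu_mono (hjk.trans hk) hk hjk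
    exact ⟨greedy_mem_greedyCandidates ⟨_, hu⟩, greedy_le_of_mem_greedyCandidates hu⟩

end Greedy

theorem stmt12_general (C₁ C₂ : Finset ℕ)
    (hcard : C₂.card ≤ C₁.card)
    (hdom : ∀ k < C₂.card, jthLargestN C₂ k ≤ jthLargestN C₁ k) :
    ∃ b : Fin C₂.card → ℕ, StrictMono b ∧
      (∀ k, b k ∈ C₁) ∧
      (∀ k : Fin C₂.card, jthSmallestN C₂ (k : ℕ) ≤ b k) ∧
      (∀ k : Fin C₂.card, ∀ c ∈ C₁, jthSmallestN C₂ (k : ℕ) ≤ c →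
        (∀ j : Fin C₂.card, j < k → b j < c) → b k ≤ c) := by
  set a := jthSmallestN C₂
  set u := fun k => jthSmallestN C₁ (C₁.card - C₂.card + k)
  have hu_mem : ∀ k < C₂.card, u k ∈ C₁ := fun k hk => jthSmallestN_mem C₁ (by omega)
  have hu_mono : StrictMonoOn u (Set.Iio C₂.card) := fun i _ j hj hij =>
    jthSmallestN_lt_jthSmallestN C₁ (by omega) (by rw [Set.mem_Iio] at hj; omega)
  have hspec := greedy_mem_greedyCandidates_and_le_of_bound hu_mem hu_mono
    fun k hk => jthSmallestN_le_jthSmallestN_of_jthLargestN_le hcard hdom hk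
  have hmem (k : Fin C₂.card) := mem_greedyCandidates.mp (hspec k k.is_lt).1
  refine ⟨fun k => greedy C₁ a k, fun j k hjk => (hmem k).2.2 ⟨j, hjk⟩,
    fun k => (hmem k).1, fun k => (hmem k).2.1, fun k c hc hac hlt => ?_⟩
  exact greedy_le_of_mem_greedyCandidates <| mem_greedyCandidates.mpr
    ⟨hc, hac, fun j => hlt ⟨j, j.is_lt.trans k.is_lt⟩ j.is_lt⟩

/-- for adjacent columns `C₁, C₂` of an RSSYT (row-wise domination,
`|C₁| ≥ |C₂|`), the operation `C₁ ◁ C₂` is well-defined: the greedy strictly increasing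
choice `b` of elements of `C₁` with `b k ≥ a k` exists, and `C₁ ◁ C₂ ≥ C₂`. -/
theorem stmt12 (C₁ C₂ : Finset ℕ)
    (hpos₁ : ∀ x ∈ C₁, 0 < x) (hpos₂ : ∀ x ∈ C₂, 0 < x)
    (hcard : C₂.card ≤ C₁.card)
    (hdom : ∀ k < C₂.card, jthLargestN C₂ k ≤ jthLargestN C₁ k) :
    ∃ b : Fin C₂.card → ℕ, StrictMono b ∧
      (∀ k, b k ∈ C₁) ∧
      (∀ k : Fin C₂.card, jthSmallestN C₂ (k : ℕ) ≤ b k) ∧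
      (∀ k : Fin C₂.card, ∀ c ∈ C₁, jthSmallestN C₂ (k : ℕ) ≤ c →
        (∀ j : Fin C₂.card, j < k → b j < c) → b k ≤ c) :=
  stmt12_general C₁ C₂ hcard hdom
end
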